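/- arXiv:1306.5851 — 6 statements merged into one kernel-verified Lean document; each statement's English description precedes it below -/
import Mathlib

section
/- Let N ≥ 1 be an integer, let c₁, …, c_N be positive real numbers, and let G be an N×N complex matrix all of whose diagonal entries G_{kk} are nonzero. Let D be the diagonal N×N matrix with diagonal entries D_{kk} = c_k·G_{kk}. If (μ_p)_{p∈ℕ} is an injective sequence of complex numbers and (x_p)_{p∈ℕ} is a sequence of vectors in ℂ^N such that (μ_p·G + D)·x_p = 0 for every p ∈ ℕ, then the set {p ∈ ℕ : x_p ≠ 0} has at most N elements. -/
/-!
For every `p` with `x p ≠ 0` the matrix `μ p • G + D` is singular, so `μ p` is a root of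
`det (X • G + D)`. This polynomial has degree at most `N`, and it is nonzero because its constant
coefficient is `det D = ∏ k, c k * G k k ≠ 0`. As `μ` is injective, there are at most `N` such `p`.
-/

open Polynomial Matrix

namespace Matrix

variable {n R : Type*} [Fintype n] [DecidableEq n]

theorem eval_det_X_smul_add_C [CommRing R] (A B : Matrix n n R) (z : R) :
    eval z (det ((X : R[X]) • A.map C + B.map C)) = det (z • A + B) := by
  rw [← coe_evalRingHom, RingHom.map_det]
  congr 1
  ext i j
  simp [mul_comm (A i j)]

theorem encard_setOf_det_smul_add_eq_zero_le [CommRing R] [IsDomain R] {A B : Matrix n n R}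
    (hB : B.det ≠ 0) : {z : R | det (z • A + B) = 0}.encard ≤ Fintype.card n := by
  classical
  set P : R[X] := det ((X : R[X]) • A.map C + B.map C) with hP_def
  have hP : P ≠ 0 := fun h => hB <| by rw [← coeff_det_X_add_C_zero A B, ← hP_def, h, coeff_zero]
  have hroots : {z : R | det (z • A + B) = 0} = (P.roots.toFinset : Set R) := by
    ext z
    simp [mem_roots hP, P, eval_det_X_smul_add_C]
  calc {z : R | det (z • A + B) = 0}.encard = P.roots.toFinset.card := by
        rw [hroots, Set.encard_coe_eq_coe_finsetCard]
    _ ≤ P.natDegree := by exact_mod_cast (Multiset.toFinset_card_le _).trans (card_roots' P)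
    _ ≤ Fintype.card n := by exact_mod_cast natDegree_det_X_add_C_le A B

end Matrix

theorem stmt_1_general {N : ℕ} (c : Fin N → ℝ) (hc : ∀ k, 0 < c k)
    (G : Matrix (Fin N) (Fin N) ℂ) (hG : ∀ k, G k k ≠ 0)
    (D : Matrix (Fin N) (Fin N) ℂ)
    (hD : D = Matrix.diagonal (fun k => (c k : ℂ) * G k k))
    (μ : ℕ → ℂ) (hμ : Function.Injective μ)
    (x : ℕ → Fin N → ℂ)
    (hx : ∀ p : ℕ, (μ p • G + D).mulVec (x p) = 0) :
    {p : ℕ | x p ≠ 0}.encard ≤ N := by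
  have hD_det : D.det ≠ 0 := by
    rw [hD, det_diagonal]
    exact Finset.prod_ne_zero_iff.mpr fun k _ =>
      mul_ne_zero (Complex.ofReal_ne_zero.mpr (hc k).ne') (hG k)
  have hsingular : Set.MapsTo μ {p | x p ≠ 0} {z | det (z • G + D) = 0} := fun p hp =>
    exists_mulVec_eq_zero_iff.mp ⟨x p, hp, hx p⟩
  calc {p : ℕ | x p ≠ 0}.encard ≤ {z : ℂ | det (z • G + D) = 0}.encard :=
        Set.encard_le_encard_of_injOn hsingular hμ.injOn
    _ ≤ N := by simpa using encard_setOf_det_smul_add_eq_zero_le (A := G) hD_det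

/-- With `G` an N×N complex matrix with nonzero diagonal entries, `c k > 0`,
and `D` the diagonal matrix with entries `c k * G k k`, if `(μ p • G + D) x p = 0` for an
injective sequence `μ` of complex numbers, then `x p ≠ 0` for at most `N` indices `p`. -/
theorem stmt_1 {N : ℕ} (hN : 1 ≤ N) (c : Fin N → ℝ) (hc : ∀ k, 0 < c k)
    (G : Matrix (Fin N) (Fin N) ℂ) (hG : ∀ k, G k k ≠ 0)
    (D : Matrix (Fin N) (Fin N) ℂ)
    (hD : D = Matrix.diagonal (fun k => (c k : ℂ) * G k k))
    (μ : ℕ → ℂ) (hμ : Function.Injective μ)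
    (x : ℕ → Fin N → ℂ)
    (hx : ∀ p : ℕ, (μ p • G + D).mulVec (x p) = 0) :
    {p : ℕ | x p ≠ 0}.encard ≤ N :=
  stmt_1_general c hc G hG D hD μ hμ x hx
end

section
/- Let N ≥ 1 be an integer, c ∈ ℝ, and let (λ_k)_{k≥1} be a strictly increasing sequence of real numbers such that λ_k = k²π² + c + r_k with ∑_{k≥1} r_k² < ∞. Assume that λ_k − λ_j ≠ λ_p − λ_n whenever j, n ∈ {1,…,N}, k ≥ j+1, p ≥ n+1 and {j,k} ≠ {p,n}. Let Ω := {λ_k − λ_j : 1 ≤ j ≤ N, k ≥ j+1} ∪ {0}. Then: (i) there exists γ > 0 such that |a − b| ≥ γ for all distinct a, b ∈ Ω; (ii) Ω has zero upper density: for every ε > 0 there exists R > 0 such that for all r ≥ R and all x ∈ ℝ, the set Ω ∩ [x, x+r] has at most ε·r elements. -/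
/-!
Only the asymptotics matter: since `|λ_k - k²π²| ≤ B`, `λ_k - λ_p ≥ π² k - 2B` whenever
`p < k`, so the gaps of the sequence tend to infinity uniformly. Hence two frequencies
`λ_k - λ_j`, `λ_p - λ_n` with `p < k` are at distance `≥ 1` once `k` is large, and the
remaining pairs come from a finite set. For the density, fix `M > 0`: beyond some index `K`
the terms of `λ - λ_j` lying in a window of length `r` are `M`-separated, so there are at most
`K + r / M + 1` of them for each of the `N + 1` values of `j`.
-/

open Set Filter Topology

def HasUniformGap (s : Set ℝ) : Prop :=
  ∃ γ : ℝ, 0 < γ ∧ ∀ a ∈ s, ∀ b ∈ s, a ≠ b → γ ≤ |a - b|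

def HasZeroUpperDensity (s : Set ℝ) : Prop :=
  ∀ ε : ℝ, 0 < ε → ∃ R : ℝ, 0 < R ∧ ∀ r : ℝ, R ≤ r → ∀ x : ℝ,
    (s ∩ Icc x (x + r)).Finite ∧ ((s ∩ Icc x (x + r)).ncard : ℝ) ≤ ε * r

-- `j = 0` and `k = j` are allowed, so that `0` is one of these differences for every `N`.
def diffSet (lam : ℕ → ℝ) (N : ℕ) : Set ℝ :=
  {x | ∃ j k : ℕ, j ≤ N ∧ j ≤ k ∧ x = lam k - lam j}

theorem HasUniformGap.mono {s t : Set ℝ} (ht : HasUniformGap t) (hst : s ⊆ t) :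
    HasUniformGap s :=
  let ⟨γ, hγ, hgap⟩ := ht
  ⟨γ, hγ, fun a ha b hb => hgap a (hst ha) b (hst hb)⟩

theorem HasZeroUpperDensity.mono {s t : Set ℝ} (ht : HasZeroUpperDensity t) (hst : s ⊆ t) :
    HasZeroUpperDensity s := by
  intro ε hε
  obtain ⟨R, hR, hcount⟩ := ht ε hε
  refine ⟨R, hR, fun r hr x => ?_⟩
  obtain ⟨hfin, hcard⟩ := hcount r hr x
  have hsub : s ∩ Icc x (x + r) ⊆ t ∩ Icc x (x + r) := inter_subset_inter_left _ hst
  exact ⟨hfin.subset hsub, le_trans (by exact_mod_cast ncard_le_ncard hsub hfin) hcard⟩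

theorem Set.Finite.hasUniformGap {s : Set ℝ} (hs : s.Finite) : HasUniformGap s := by
  have hgaps : ∀ q ∈ s.offDiag, ∀ᶠ γ in 𝓝[>] (0 : ℝ), γ ≤ |q.1 - q.2| := fun q hq =>
    nhdsWithin_le_nhds <|
      (eventually_lt_nhds (abs_pos.2 (sub_ne_zero.2 hq.2.2))).mono fun _ => le_of_lt
  obtain ⟨γ, hγ, hγ0⟩ := ((hs.offDiag.eventually_all.2 hgaps).and self_mem_nhdsWithin).exists
  exact ⟨γ, hγ0, fun a ha b hb hab => hγ (a, b) ⟨ha, hb, hab⟩⟩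

theorem hasZeroUpperDensity_of_ncard_le {s : Set ℝ}
    (h : ∀ δ : ℝ, 0 < δ → ∃ C : ℝ, ∀ x r : ℝ, 0 ≤ r →
      (s ∩ Icc x (x + r)).Finite ∧ ((s ∩ Icc x (x + r)).ncard : ℝ) ≤ C + δ * r) :
    HasZeroUpperDensity s := by
  intro ε hε
  obtain ⟨C, hC⟩ := h (ε / 2) (half_pos hε)
  refine ⟨max 1 (2 * C / ε), lt_max_of_lt_left one_pos, fun r hr x => ?_⟩
  obtain ⟨hfin, hcard⟩ := hC x r (zero_le_one.trans ((le_max_left _ _).trans hr))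
  have hCr : 2 * C ≤ r * ε := (div_le_iff₀ hε).1 ((le_max_right _ _).trans hr)
  exact ⟨hfin, by linarith⟩

theorem eventually_le_sub_of_abs_sub_le {lam : ℕ → ℝ} {a c B : ℝ} (ha : 0 < a)
    (hB : ∀ k : ℕ, |lam k - (k : ℝ) ^ 2 * a - c| ≤ B) (M : ℝ) :
    ∀ᶠ k in atTop, ∀ p < k, M ≤ lam k - lam p := by
  filter_upwards [(tendsto_natCast_atTop_atTop.const_mul_atTop ha).eventually_ge_atTop
    (M + 2 * B)] with k hk p hpk
  have hpk' : (p : ℝ) + 1 ≤ k := by exact_mod_cast hpk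
  have hsq : (k : ℝ) ≤ (k : ℝ) ^ 2 - (p : ℝ) ^ 2 := by nlinarith [(p.cast_nonneg : (0 : ℝ) ≤ p)]
  have hgrowth := mul_le_mul_of_nonneg_left hsq ha.le
  have hk' := abs_le.1 (hB k)
  have hp' := abs_le.1 (hB p)
  linarith

section Spreading

variable {lam : ℕ → ℝ}

theorem hasUniformGap_diffSet (hlam : ∀ M : ℝ, ∀ᶠ k in atTop, ∀ p < k, M ≤ lam k - lam p)
    (N : ℕ) : HasUniformGap (diffSet lam N) := by
  obtain ⟨D, hD⟩ := ((finite_Iic N).image fun j => |lam j|).bddAbove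
  have hbound : ∀ j ≤ N, |lam j| ≤ D := fun j hj => hD (mem_image_of_mem _ hj)
  obtain ⟨K, hK⟩ := eventually_atTop.1 ((hlam (2 * D + 1)).and (eventually_ge_atTop N))
  have hNK : N ≤ K := (hK K le_rfl).2
  obtain ⟨γ, hγ, hfinite⟩ :=
    ((finite_Iic N).image2 (fun j k => lam k - lam j) (finite_Iic K)).hasUniformGap
  have hmem : ∀ j k, j ≤ N → k ≤ K → lam k - lam j ∈ image2 (fun j k => lam k - lam j)
      (Iic N) (Iic K) := fun j k hj hk => mem_image2_of_mem hj hk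
  refine ⟨min γ 1, lt_min hγ one_pos, ?_⟩
  rintro _ ⟨j, k, hjN, hjk, rfl⟩ _ ⟨n, p, hnN, hnp, rfl⟩ hne
  wlog hpk : p ≤ k generalizing j k n p
  · rw [abs_sub_comm]
    exact this n p hnN hnp j k hjN hjk hne.symm (by omega)
  rcases hpk.lt_or_eq with hpk | rfl
  · by_cases hkK : k ≤ K
    · exact (min_le_left _ _).trans
        (hfinite _ (hmem j k hjN hkK) _ (hmem n p hnN (hpk.le.trans hkK)) hne)
    -- far out, the gap `λ_k - λ_p` dominates the bounded correction `λ_n - λ_j`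
    · have hfar := (hK k (by omega)).1 p hpk
      have hj := abs_le.1 (hbound j hjN)
      have hn := abs_le.1 (hbound n hnN)
      exact (min_le_right _ _).trans (le_abs.2 (Or.inl (by linarith)))
  · have hshift : lam p - lam j - (lam p - lam n) = lam K - lam j - (lam K - lam n) := by ring
    have hne' : lam K - lam j ≠ lam K - lam n := fun h => hne (by linarith)
    rw [hshift]
    exact (min_le_left _ _).trans (hfinite _ (hmem j K hjN le_rfl) _ (hmem n K hnN le_rfl) hne')

theorem finite_and_ncard_preimage_Icc_le {M : ℝ} {K : ℕ} (hM : 0 < M)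
    (hK : ∀ k ≥ K, ∀ p < k, M ≤ lam k - lam p) (y : ℝ) {r : ℝ} (hr : 0 ≤ r) :
    (lam ⁻¹' Icc y (y + r)).Finite ∧ ((lam ⁻¹' Icc y (y + r)).ncard : ℝ) ≤ K + r / M + 1 := by
  set S := lam ⁻¹' Icc y (y + r)
  -- beyond `K`, two terms in the same `M`-cell of the window would be closer than `M`
  set cell : ℕ → ℕ := fun k => ⌊(lam k - y) / M⌋₊
  have hmaps : MapsTo cell (S ∩ Ici K) (Iic ⌊r / M⌋₊) := fun k hk =>
    Nat.floor_le_floor (div_le_div_of_nonneg_right (by linarith [hk.1.2]) hM.le)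
  have hinj : InjOn cell (S ∩ Ici K) := by
    intro k hk k' hk' hcell
    by_contra hne
    wlog hlt : k' < k generalizing k k'
    · exact this hk' hk hcell.symm (Ne.symm hne) (by omega)
    have hk_lt := Nat.lt_floor_add_one ((lam k - y) / M)
    have hk'_le := Nat.floor_le (div_nonneg (sub_nonneg.2 hk'.1.1) hM.le)
    have hcell' : ⌊(lam k - y) / M⌋₊ = ⌊(lam k' - y) / M⌋₊ := hcell
    rw [hcell'] at hk_lt
    have hclose : (lam k - y) / M - (lam k' - y) / M < 1 := by linarith
    rw [← sub_div, div_lt_one hM] at hclose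
    linarith [hK k hk.2 k' hlt]
  have hS : S ⊆ Iio K ∪ (S ∩ Ici K) := fun k hk => (lt_or_ge k K).imp id fun h => ⟨hk, h⟩
  have hfin : (Iio K ∪ (S ∩ Ici K)).Finite :=
    (finite_Iio K).union ((finite_Iic _).of_injOn hmaps hinj)
  refine ⟨hfin.subset hS, ?_⟩
  have hcard : S.ncard ≤ K + (⌊r / M⌋₊ + 1) :=
    calc S.ncard ≤ (Iio K ∪ (S ∩ Ici K)).ncard := ncard_le_ncard hS hfin
      _ ≤ (Iio K).ncard + (S ∩ Ici K).ncard := ncard_union_le _ _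
      _ ≤ K + (⌊r / M⌋₊ + 1) := by
        rw [ncard_Iio_nat, ← ncard_Iic_nat]
        exact Nat.add_le_add_left (ncard_le_ncard_of_injOn cell hmaps hinj) _
  have hfloor := Nat.floor_le (div_nonneg hr hM.le)
  calc (S.ncard : ℝ) ≤ K + (⌊r / M⌋₊ + 1) := by exact_mod_cast hcard
    _ ≤ K + r / M + 1 := by linarith

theorem finite_and_ncard_diffSet_inter_Icc_le {M : ℝ} {K : ℕ} (hM : 0 < M)
    (hK : ∀ k ≥ K, ∀ p < k, M ≤ lam k - lam p) (N : ℕ) (x : ℝ) {r : ℝ} (hr : 0 ≤ r) :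
    (diffSet lam N ∩ Icc x (x + r)).Finite ∧
      ((diffSet lam N ∩ Icc x (x + r)).ncard : ℝ) ≤ (N + 1) * (K + r / M + 1) := by
  set shift : ℕ → ℕ → ℝ := fun j k => lam k - lam j
  have hwindow : ∀ j, ((shift j ⁻¹' Icc x (x + r)).Finite ∧
      ((shift j ⁻¹' Icc x (x + r)).ncard : ℝ) ≤ K + r / M + 1) := fun j =>
    finite_and_ncard_preimage_Icc_le hM
      (fun k hk p hp => by simpa [shift] using hK k hk p hp) x hr
  have hsub : diffSet lam N ∩ Icc x (x + r) ⊆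
      ⋃ j ∈ Finset.range (N + 1), shift j '' (shift j ⁻¹' Icc x (x + r)) := by
    rintro _ ⟨⟨j, k, hjN, -, rfl⟩, hx⟩
    exact mem_iUnion₂.2 ⟨j, Finset.mem_range.2 (Nat.lt_succ_of_le hjN), k, hx, rfl⟩
  have hfin : (⋃ j ∈ Finset.range (N + 1), shift j '' (shift j ⁻¹' Icc x (x + r))).Finite :=
    (Finset.range (N + 1)).finite_toSet.biUnion fun j _ => (hwindow j).1.image _
  refine ⟨hfin.subset hsub, ?_⟩
  have hcard : (diffSet lam N ∩ Icc x (x + r)).ncard ≤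
      ∑ j ∈ Finset.range (N + 1), (shift j ⁻¹' Icc x (x + r)).ncard :=
    calc _ ≤ _ := ncard_le_ncard hsub hfin
      _ ≤ _ := Finset.set_ncard_biUnion_le _ _
      _ ≤ _ := Finset.sum_le_sum fun j _ => ncard_image_le (hwindow j).1
  calc ((diffSet lam N ∩ Icc x (x + r)).ncard : ℝ)
      ≤ ∑ j ∈ Finset.range (N + 1), ((shift j ⁻¹' Icc x (x + r)).ncard : ℝ) := by
        exact_mod_cast hcard
    _ ≤ ∑ _j ∈ Finset.range (N + 1), ((K : ℝ) + r / M + 1) :=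
        Finset.sum_le_sum fun j _ => (hwindow j).2
    _ = (N + 1) * (K + r / M + 1) := by
        rw [Finset.sum_const, Finset.card_range, nsmul_eq_mul]
        push_cast
        ring

theorem hasZeroUpperDensity_diffSet
    (hlam : ∀ M : ℝ, ∀ᶠ k in atTop, ∀ p < k, M ≤ lam k - lam p) (N : ℕ) :
    HasZeroUpperDensity (diffSet lam N) := by
  refine hasZeroUpperDensity_of_ncard_le fun δ hδ => ?_
  have hM : 0 < (N + 1 : ℝ) / δ := by positivity
  obtain ⟨K, hK⟩ := eventually_atTop.1 (hlam ((N + 1) / δ))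
  refine ⟨(N + 1) * (K + 1), fun x r hr => ?_⟩
  obtain ⟨hfin, hcard⟩ := finite_and_ncard_diffSet_inter_Icc_le hM hK N x hr
  refine ⟨hfin, hcard.trans_eq ?_⟩
  field_simp
  ring

end Spreading

theorem stmt_3_general (N : ℕ) (c : ℝ) (lam : ℕ → ℝ)
    (hasym : Summable fun k : ℕ => (lam k - (k : ℝ) ^ 2 * Real.pi ^ 2 - c) ^ 2) :
    let Ω : Set ℝ :=
      {x | ∃ j k : ℕ, 1 ≤ j ∧ j ≤ N ∧ j + 1 ≤ k ∧ x = lam k - lam j} ∪ {0}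
    (∃ γ : ℝ, 0 < γ ∧ ∀ a ∈ Ω, ∀ b ∈ Ω, a ≠ b → γ ≤ |a - b|) ∧
    (∀ ε : ℝ, 0 < ε → ∃ R : ℝ, 0 < R ∧ ∀ r : ℝ, R ≤ r → ∀ x : ℝ,
      (Ω ∩ Set.Icc x (x + r)).Finite ∧
      ((Ω ∩ Set.Icc x (x + r)).ncard : ℝ) ≤ ε * r) := by
  intro Ω
  obtain ⟨B, hB⟩ := hasym.tendsto_atTop_zero.bddAbove_range
  have hspread := eventually_le_sub_of_abs_sub_le (pow_pos Real.pi_pos 2)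
    fun k => Real.abs_le_sqrt (hB (mem_range_self k))
  have hΩ : Ω ⊆ diffSet lam N := by
    rintro _ (⟨j, k, -, hjN, hjk, rfl⟩ | rfl)
    exacts [⟨j, k, hjN, by omega, rfl⟩, ⟨0, 0, N.zero_le, le_rfl, (sub_self _).symm⟩]
  exact ⟨(hasUniformGap_diffSet hspread N).mono hΩ,
    (hasZeroUpperDensity_diffSet hspread N).mono hΩ⟩

/-- Under Condition (C₄) and the classical eigenvalue asymptotics
`λ_k = k²π² + c + r_k` with `∑ r_k² < ∞`, the frequency set
`Ω = {λ_k − λ_j : 1 ≤ j ≤ N, k ≥ j+1} ∪ {0}` has a uniform gap and zero upper density. -/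
theorem stmt_3 (N : ℕ) (hN : 1 ≤ N) (c : ℝ) (lam : ℕ → ℝ)
    (hmono : ∀ j k : ℕ, 1 ≤ j → j < k → lam j < lam k)
    (hasym : Summable fun k : ℕ => (lam k - (k : ℝ) ^ 2 * Real.pi ^ 2 - c) ^ 2)
    (hC4 : ∀ j n k p : ℕ, 1 ≤ j → j ≤ N → 1 ≤ n → n ≤ N → j + 1 ≤ k → n + 1 ≤ p →
      ({j, k} : Finset ℕ) ≠ ({n, p} : Finset ℕ) → lam k - lam j ≠ lam p - lam n) :
    let Ω : Set ℝ :=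
      {x | ∃ j k : ℕ, 1 ≤ j ∧ j ≤ N ∧ j + 1 ≤ k ∧ x = lam k - lam j} ∪ {0}
    (∃ γ : ℝ, 0 < γ ∧ ∀ a ∈ Ω, ∀ b ∈ Ω, a ≠ b → γ ≤ |a - b|) ∧
    (∀ ε : ℝ, 0 < ε → ∃ R : ℝ, 0 < R ∧ ∀ r : ℝ, R ≤ r → ∀ x : ℝ,
      (Ω ∩ Set.Icc x (x + r)).Finite ∧
      ((Ω ∩ Set.Icc x (x + r)).ncard : ℝ) ≤ ε * r) :=
  stmt_3_general N c lam hasym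
end

section
/- Let W : [0,1] → ℝ be continuous, let λ ≠ ν be real numbers, and let u, v : [0,1] → ℝ be twice continuously differentiable with u(0) = u(1) = v(0) = v(1) = 0, −u'' + W·u = λ·u and −v'' + W·v = ν·v on [0,1]. Then for every twice continuously differentiable μ : [0,1] → ℝ one has ∫₀¹ μ(x)u(x)v(x) dx = (1/(λ−ν))·∫₀¹ ( μ''(x)u(x) + 2μ'(x)u'(x) )·v(x) dx. -/
/-!
Put `w = μ u`. Lagrange's identity `(w' v - w v')' = w'' v - w v''` together with the Dirichlet
conditions gives `∫₀¹ (w'' v - w v'') = 0`. Expanding `w'' = μ'' u + 2 μ' u' + μ u''` and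
substituting `u'' = (W - λ) u`, `v'' = (W - ν) v`, the potential `W` cancels and the integrand
becomes `(μ'' u + 2 μ' u') v - (λ - ν) μ u v`.
-/

open intervalIntegral

section
variable {𝕜 : Type*} [NontriviallyNormedField 𝕜]

theorem ContDiff.continuous_deriv_deriv {F : Type*} [NormedAddCommGroup F] [NormedSpace 𝕜 F]
    {f : 𝕜 → F} (hf : ContDiff 𝕜 2 f) :
    Continuous (deriv (deriv f)) :=
  (hf.deriv' (n := 1)).continuous_deriv_one

theorem deriv_deriv_mul {f g : 𝕜 → 𝕜} (hf : ContDiff 𝕜 2 f) (hg : ContDiff 𝕜 2 g) (x : 𝕜) :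
    deriv (deriv fun y => f y * g y) x
      = deriv (deriv f) x * g x + 2 * deriv f x * deriv g x + f x * deriv (deriv g) x := by
  have hf₁ := hf.differentiable two_ne_zero
  have hg₁ := hg.differentiable two_ne_zero
  have h_deriv : deriv (fun y => f y * g y) = fun y => deriv f y * g y + f y * deriv g y :=
    funext fun y => deriv_mul (hf₁ y) (hg₁ y)
  rw [h_deriv]
  have h := ((hf.differentiable_deriv_two x).hasDerivAt.mul (hg₁ x).hasDerivAt).add
    ((hf₁ x).hasDerivAt.mul (hg.differentiable_deriv_two x).hasDerivAt)
  exact h.deriv.trans (by ring)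

end

theorem integral_deriv_deriv_mul_sub_mul_deriv_deriv {f g : ℝ → ℝ}
    (hf : ContDiff ℝ 2 f) (hg : ContDiff ℝ 2 g) (a b : ℝ) :
    ∫ x in a..b, (deriv (deriv f) x * g x - f x * deriv (deriv g) x)
      = (deriv f b * g b - f b * deriv g b) - (deriv f a * g a - f a * deriv g a) := by
  have hf₁ := hf.differentiable two_ne_zero
  have hg₁ := hg.differentiable two_ne_zero
  refine integral_eq_sub_of_hasDerivAt (f := fun x => deriv f x * g x - f x * deriv g x)
    (fun x _ => ?_) ?_
  · have h := ((hf.differentiable_deriv_two x).hasDerivAt.mul (hg₁ x).hasDerivAt).sub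
      ((hf₁ x).hasDerivAt.mul (hg.differentiable_deriv_two x).hasDerivAt)
    exact h.congr_deriv (by ring)
  · exact ((hf.continuous_deriv_deriv.mul hg.continuous).sub
      (hf.continuous.mul hg.continuous_deriv_deriv)).intervalIntegrable a b

theorem stmt_5_general (W μ u v : ℝ → ℝ) (lam ν : ℝ) (hne : lam ≠ ν)
    (hu : ContDiff ℝ 2 u) (hv : ContDiff ℝ 2 v)
    (hu0 : u 0 = 0) (hu1 : u 1 = 0) (hv0 : v 0 = 0) (hv1 : v 1 = 0)
    (hodeu : ∀ x ∈ Set.Icc (0 : ℝ) 1, -(deriv (deriv u)) x + W x * u x = lam * u x)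
    (hodev : ∀ x ∈ Set.Icc (0 : ℝ) 1, -(deriv (deriv v)) x + W x * v x = ν * v x)
    (hμ : ContDiff ℝ 2 μ) :
    ∫ x in (0 : ℝ)..1, μ x * u x * v x
      = (1 / (lam - ν)) *
          ∫ x in (0 : ℝ)..1, (deriv (deriv μ) x * u x + 2 * deriv μ x * deriv u x) * v x := by
  have hμu : ContDiff ℝ 2 fun x => μ x * u x := hμ.mul hu
  have h_green := integral_deriv_deriv_mul_sub_mul_deriv_deriv hμu hv 0 1
  simp only [hu0, hu1, hv0, hv1, mul_zero, zero_mul, sub_zero] at h_green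
  have h_integrand : ∀ x ∈ Set.uIcc (0 : ℝ) 1,
      (deriv (deriv μ) x * u x + 2 * deriv μ x * deriv u x) * v x
        = (deriv (deriv fun y => μ y * u y) x * v x - μ x * u x * deriv (deriv v) x)
          + (lam - ν) * (μ x * u x * v x) := by
    intro x hx
    rw [Set.uIcc_of_le zero_le_one] at hx
    rw [deriv_deriv_mul hμ hu]
    linear_combination (μ x * v x) * hodeu x hx - (μ x * u x) * hodev x hx
  have h_int : IntervalIntegrable (fun x => μ x * u x * v x) MeasureTheory.volume 0 1 :=
    (hμu.continuous.mul hv.continuous).intervalIntegrable 0 1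
  rw [integral_congr h_integrand, integral_add _ (h_int.const_mul _), h_green,
    integral_const_mul, zero_add]
  · field_simp [sub_ne_zero.mpr hne]
  · exact ((hμu.continuous_deriv_deriv.mul hv.continuous).sub
      (hμu.continuous.mul hv.continuous_deriv_deriv)).intervalIntegrable 0 1

/-- For Dirichlet eigenfunctions `u`, `v` of `−∂²ₓₓ + W` on `[0,1]` with distinct
eigenvalues `λ ≠ ν`, and any C² function `μ`:
`∫₀¹ μ u v = (1/(λ−ν)) ∫₀¹ (μ'' u + 2 μ' u') v`. -/
theorem stmt_5 (W μ u v : ℝ → ℝ) (lam ν : ℝ) (hne : lam ≠ ν)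
    (hW : ContinuousOn W (Set.Icc 0 1))
    (hu : ContDiff ℝ 2 u) (hv : ContDiff ℝ 2 v)
    (hu0 : u 0 = 0) (hu1 : u 1 = 0) (hv0 : v 0 = 0) (hv1 : v 1 = 0)
    (hodeu : ∀ x ∈ Set.Icc (0 : ℝ) 1, -(deriv (deriv u)) x + W x * u x = lam * u x)
    (hodev : ∀ x ∈ Set.Icc (0 : ℝ) 1, -(deriv (deriv v)) x + W x * v x = ν * v x)
    (hμ : ContDiff ℝ 2 μ) :
    ∫ x in (0 : ℝ)..1, μ x * u x * v x
      = (1 / (lam - ν)) *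
          ∫ x in (0 : ℝ)..1, (deriv (deriv μ) x * u x + 2 * deriv μ x * deriv u x) * v x :=
  stmt_5_general W μ u v lam ν hne hu hv hu0 hu1 hv0 hv1 hodeu hodev hμ
end

section
/- Let H be an infinite-dimensional separable complex Hilbert space and (e_k)_{k≥1} a Hilbert (orthonormal) basis of H. For ψ ∈ H set ‖ψ‖_{(3)} := ( ∑_{k≥1} k⁶·|⟨ψ, e_k⟩|² )^{1/2} ∈ [0,∞]. Let M, N ≥ 1 be integers and let z = (z¹,…,z^N) be an N-tuple of vectors of span{e₁,…,e_M}. Then for every ε > 0 there exists δ > 0 with the following property: for every N-tuple φ = (φ¹,…,φ^N) of vectors of H such that (a) there exists a unitary operator V on H with V z^j = φ^j for all j ∈ {1,…,N}, and (b) ‖φ^j‖_{(3)} < ∞ for each j and ∑_{j=1}^N ‖φ^j − z^j‖_{(3)} < δ, there exists a unitary operator U on H such that U z^j = φ^j for all j ∈ {1,…,N} and, for each j ∈ {1,…,M}, ‖U e_j − e_j‖_{(3)} < ε (in particular U e_j has finite ‖·‖_{(3)}). -/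
open scoped ENNReal

/-- The weighted coefficient norm `‖ψ‖_{(3)} = (∑_{k≥1} k⁶ |⟨ψ, e_k⟩|²)^{1/2} ∈ [0,∞]`,
expressed through a Hilbert basis `b` indexed by `ℕ+`. -/
noncomputable def norm3 {H : Type*} [NormedAddCommGroup H] [InnerProductSpace ℂ H]
    (b : HilbertBasis ℕ+ ℂ H) (ψ : H) : ℝ≥0∞ :=
  (∑' k : ℕ+, ((k : ℕ) : ℝ≥0∞) ^ 6 * ((‖(b.repr ψ : ∀ _ : ℕ+, ℂ) k‖₊ : ℝ≥0∞)) ^ 2)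
    ^ ((1 : ℝ) / 2)

/-!
Let `g` be an orthonormal basis of `span z`, completed by `f` to an orthonormal basis of
`C_M = span {e₁, …, e_M}`. Each `V g_i` is a fixed linear combination of the `φ^j`, so
`‖V g_i - g_i‖₍₃₎ = O(η)` with `η = ∑_j ‖φ^j - z^j‖₍₃₎`. Gram–Schmidt applied to the `f_i`
against the orthonormal family `V g` produces vectors `y_i` with `‖y_i - f_i‖₍₃₎ = O(η)`: the
projection coefficients are inner products, bounded by Hilbert norms, which `‖·‖₍₃₎` dominates,
and the renormalising factors are `1 + O(η)`. A unitary sending `(g, f)` to `(V g, y)` agrees with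
`V` on `span z` and moves every `e_k`, `k ≤ M`, by `O(η)` in `‖·‖₍₃₎`.
-/

open Module Submodule Set
open scoped InnerProductSpace

section
variable {𝕜 E : Type*} [RCLike 𝕜] [NormedAddCommGroup E] [InnerProductSpace 𝕜 E]

theorem Orthonormal.sum_elim_snoc {ι : Type*} {w : ι → E} {r : ℕ} {y : Fin r → E} {a : E}
    (h : Orthonormal 𝕜 (Sum.elim w y)) (ha : ‖a‖ = 1) (hperp : ∀ i, ⟪Sum.elim w y i, a⟫_𝕜 = 0) :
    Orthonormal 𝕜 (Sum.elim w (Fin.snoc y a : Fin (r + 1) → E)) := by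
  set F := Sum.elim w (Fin.snoc y a : Fin (r + 1) → E)
  have hcast : ∀ i, F (Sum.map id Fin.castSucc i) = Sum.elim w y i := by
    rintro (i | i) <;> simp [F]
  have hlast : F (.inr (Fin.last r)) = a := by simp [F]
  have hcases : ∀ j : ι ⊕ Fin (r + 1),
      j = .inr (Fin.last r) ∨ ∃ i, j = Sum.map id Fin.castSucc i := by
    rintro (i | j)
    · exact .inr ⟨.inl i, rfl⟩
    · induction j using Fin.lastCases with
      | last => exact .inl rfl
      | cast j => exact .inr ⟨.inr j, rfl⟩
  refine ⟨fun j => ?_, fun j k hjk => ?_⟩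
  · rcases hcases j with rfl | ⟨i, rfl⟩
    · rw [hlast, ha]
    · rw [hcast, h.1]
  rcases hcases j with rfl | ⟨i, rfl⟩ <;> rcases hcases k with rfl | ⟨l, rfl⟩
  · exact absurd rfl hjk
  · rw [hlast, hcast, inner_eq_zero_symm, hperp]
  · rw [hcast, hlast, hperp]
  · rw [hcast, hcast]
    exact h.2 fun hil => hjk (by rw [hil])

theorem Orthonormal.exists_orthonormalBasis_sum_extension [FiniteDimensional 𝕜 E] {ι : Type*}
    [Fintype ι] {v : ι → E} (hv : Orthonormal 𝕜 v) :
    ∃ b : OrthonormalBasis (ι ⊕ Fin (finrank 𝕜 E - Fintype.card ι)) 𝕜 E, ∀ i, b (.inl i) = v i := by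
  have hcard : finrank 𝕜 E = Fintype.card (ι ⊕ Fin (finrank 𝕜 E - Fintype.card ι)) := by
    have := hv.linearIndependent.fintype_card_le_finrank
    simp only [Fintype.card_sum, Fintype.card_fin]
    omega
  have hv' : Orthonormal 𝕜 ((range (Sum.inl (β := Fin (finrank 𝕜 E - Fintype.card ι)))).domRestrict
      (Sum.elim v 0)) := by
    refine ⟨?_, ?_⟩
    · rintro ⟨_, i, rfl⟩
      exact hv.1 i
    · rintro ⟨_, i, rfl⟩ ⟨_, j, rfl⟩ hij
      exact hv.2 (by rintro rfl; exact hij rfl)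
  obtain ⟨b, hb⟩ := hv'.exists_orthonormalBasis_extension_of_card_eq hcard
  exact ⟨b, fun i => hb _ ⟨i, rfl⟩⟩

theorem OrthonormalBasis.span_range_coe {K : Submodule 𝕜 E} {ι : Type*} [Fintype ι]
    (b : OrthonormalBasis ι 𝕜 K) : span 𝕜 (range fun i => (b i : E)) = K := by
  calc span 𝕜 (range fun i => (b i : E)) = (span 𝕜 (range b.toBasis)).map K.subtype := by
        rw [Submodule.map_span, ← range_comp]
        simp [Function.comp_def]
    _ = K := by rw [b.toBasis.span_eq, Submodule.map_subtype_top]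

theorem Submodule.exists_linearIsometryEquiv_extend (K : Submodule 𝕜 E)
    [K.HasOrthogonalProjection] (A : K ≃ₗᵢ[𝕜] K) : ∃ U : E ≃ₗᵢ[𝕜] E, ∀ x : K, U x = A x :=
  ⟨K.orthogonalDecomposition.trans ((A.withLpProdCongr 2 (.refl 𝕜 Kᗮ)).trans
    K.orthogonalDecomposition.symm), fun x => by simp⟩

theorem exists_linearIsometryEquiv_apply_eq_of_orthonormal {ι : Type*} [Fintype ι]
    {u v : ι → E} (hu : Orthonormal 𝕜 u) (hv : Orthonormal 𝕜 v) :
    ∃ U : E ≃ₗᵢ[𝕜] E, ∀ i, U (u i) = v i := by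
  classical
  set G := span 𝕜 (range u ∪ range v)
  have : FiniteDimensional 𝕜 G := .span_of_finite 𝕜 ((finite_range u).union (finite_range v))
  let u' : ι → G := fun i => ⟨u i, subset_span (.inl ⟨i, rfl⟩)⟩
  let v' : ι → G := fun i => ⟨v i, subset_span (.inr ⟨i, rfl⟩)⟩
  obtain ⟨bu, hbu⟩ := (G.subtypeₗᵢ.orthonormal_comp_iff (v := u')).1 hu
    |>.exists_orthonormalBasis_sum_extension
  obtain ⟨bv, hbv⟩ := (G.subtypeₗᵢ.orthonormal_comp_iff (v := v')).1 hv
    |>.exists_orthonormalBasis_sum_extension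
  obtain ⟨U, hU⟩ := G.exists_linearIsometryEquiv_extend (bu.repr.trans bv.repr.symm)
  refine ⟨U, fun i => ?_⟩
  have h := hU (bu (.inl i))
  rw [LinearIsometryEquiv.trans_apply, OrthonormalBasis.repr_self,
    OrthonormalBasis.repr_symm_single, hbu, hbv] at h
  exact h

theorem exists_orthonormal_sum_span_eq {S W : Submodule 𝕜 E} [FiniteDimensional 𝕜 W] (hSW : S ≤ W) :
    ∃ (r : ℕ) (u : Fin (finrank 𝕜 S) ⊕ Fin r → E), Orthonormal 𝕜 u ∧
      span 𝕜 (range (u ∘ Sum.inl)) = S ∧ span 𝕜 (range u) = W := by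
  have : FiniteDimensional 𝕜 S := Submodule.finiteDimensional_of_le hSW
  set g := stdOrthonormalBasis 𝕜 S
  let g' : Fin (finrank 𝕜 S) → W := fun i => ⟨g i, hSW (g i).2⟩
  obtain ⟨bW, hbW⟩ := (W.subtypeₗᵢ.orthonormal_comp_iff (v := g')).1
    (S.subtypeₗᵢ.orthonormal_comp_iff.2 g.orthonormal) |>.exists_orthonormalBasis_sum_extension
  refine ⟨_, fun i => bW i, W.subtypeₗᵢ.orthonormal_comp_iff.2 bW.orthonormal, ?_, ?_⟩
  · calc _ = span 𝕜 (range fun i => (g i : E)) := by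
          congr 2
          ext i
          simp [hbW, g']
      _ = S := g.span_range_coe
  · simpa using bW.span_range_coe

end

section
variable {H : Type*} [NormedAddCommGroup H] [InnerProductSpace ℂ H] (b : HilbertBasis ℕ+ ℂ H)

theorem norm3_smul (a : ℂ) (ψ : H) : norm3 b (a • ψ) = ‖a‖ₑ * norm3 b ψ := by
  have hterm : ∀ k : ℕ+, ((k : ℕ) : ℝ≥0∞) ^ 6 * (‖(b.repr (a • ψ) : ∀ _ : ℕ+, ℂ) k‖₊ : ℝ≥0∞) ^ 2
      = ‖a‖ₑ ^ (2 : ℝ) * (((k : ℕ) : ℝ≥0∞) ^ 6 * (‖(b.repr ψ : ∀ _ : ℕ+, ℂ) k‖₊ : ℝ≥0∞) ^ 2) := by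
    intro k
    simp only [map_smul, lp.coeFn_smul, Pi.smul_apply, smul_eq_mul, nnnorm_mul, ENNReal.coe_mul,
      ENNReal.rpow_two, enorm_eq_nnnorm]
    ring
  rw [norm3, norm3, tsum_congr hterm, ENNReal.tsum_mul_left,
    ENNReal.mul_rpow_of_nonneg _ _ (by norm_num), ← ENNReal.rpow_mul]
  norm_num

theorem norm3_neg (ψ : H) : norm3 b (-ψ) = norm3 b ψ := by
  simpa using norm3_smul b (-1) ψ

theorem norm3_zero : norm3 b (0 : H) = 0 := by
  simpa using norm3_smul b 0 (0 : H)

open MeasureTheory in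
theorem norm3_add_le (x y : H) : norm3 b (x + y) ≤ norm3 b x + norm3 b y := by
  -- Minkowski's inequality in `ℓ²(ℕ+)`, through the counting measure.
  let : MeasurableSpace ℕ+ := ⊤
  have : MeasurableSingletonClass ℕ+ := ⟨fun _ => trivial⟩
  set F : H → ℕ+ → ℝ≥0∞ := fun ψ k => ((k : ℕ) : ℝ≥0∞) ^ 3 * ‖(b.repr ψ : ∀ _ : ℕ+, ℂ) k‖ₑ
  have hF : ∀ ψ, norm3 b ψ = (∫⁻ k, F ψ k ^ (2 : ℝ) ∂Measure.count) ^ (1 / 2 : ℝ) := by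
    intro ψ
    rw [norm3, lintegral_count]
    congr 1
    refine tsum_congr fun k => ?_
    simp only [F, ENNReal.rpow_two, mul_pow, ← pow_mul, enorm_eq_nnnorm]
  rw [hF, hF, hF]
  calc _ ≤ (∫⁻ k, (F x + F y) k ^ (2 : ℝ) ∂Measure.count) ^ (1 / 2 : ℝ) := by
        gcongr with k
        simp only [F, Pi.add_apply, ← mul_add, map_add, lp.coeFn_add]
        gcongr
        exact enorm_add_le _ _
    _ ≤ _ := ENNReal.lintegral_Lp_add_le (measurable_from_top.aemeasurable)
        (measurable_from_top.aemeasurable) one_le_two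

theorem norm3_sum_le {ι : Type*} (s : Finset ι) (f : ι → H) :
    norm3 b (∑ i ∈ s, f i) ≤ ∑ i ∈ s, norm3 b (f i) :=
  Finset.le_sum_of_subadditive _ (norm3_zero b).le (norm3_add_le b) s f

theorem enorm_le_norm3 (x : H) : ‖x‖ₑ ≤ norm3 b x := by
  have hparseval : ‖x‖ₑ ^ (2 : ℝ) = ∑' k, ‖(b.repr x : ∀ _ : ℕ+, ℂ) k‖ₑ ^ (2 : ℝ) := by
    have h2 : (0 : ℝ) < (2 : ℝ≥0∞).toReal := by norm_num
    have hsum := lp.hasSum_norm h2 (b.repr x)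
    rw [ENNReal.toReal_ofNat] at hsum
    rw [← b.repr.enorm_map, ← ofReal_norm,
      ENNReal.ofReal_rpow_of_nonneg (norm_nonneg _) zero_le_two, ← hsum.tsum_eq,
      ENNReal.ofReal_tsum_of_nonneg (fun _ => by positivity) hsum.summable]
    simp_rw [← ENNReal.ofReal_rpow_of_nonneg (norm_nonneg _) zero_le_two, ofReal_norm]
  rw [norm3, one_div, ENNReal.le_rpow_inv_iff two_pos, hparseval]
  refine ENNReal.tsum_le_tsum fun k => ?_
  rw [ENNReal.rpow_two, enorm_eq_nnnorm]
  refine le_mul_of_one_le_left zero_le (one_le_pow₀ ?_)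
  exact_mod_cast k.pos

theorem norm3_hilbertBasis (k : ℕ+) : norm3 b (b k) = ((k : ℕ) : ℝ≥0∞) ^ 3 := by
  classical
  have hterm : ∀ i : ℕ+, ((i : ℕ) : ℝ≥0∞) ^ 6 * (‖(b.repr (b k) : ∀ _ : ℕ+, ℂ) i‖₊ : ℝ≥0∞) ^ 2
      = if i = k then ((k : ℕ) : ℝ≥0∞) ^ 6 else 0 := by
    intro i
    rw [b.repr_self, lp.single_apply]
    by_cases h : i = k <;> simp [h]
  rw [norm3, tsum_congr hterm, tsum_ite_eq, ← ENNReal.rpow_natCast, ← ENNReal.rpow_mul,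
    ← ENNReal.rpow_natCast]
  norm_num

theorem norm3_lt_top_of_mem_span {s : Set H} (hs : ∀ y ∈ s, norm3 b y < ⊤) {x : H}
    (hx : x ∈ span ℂ s) : norm3 b x < ⊤ := by
  induction hx using Submodule.span_induction with
  | mem y hy => exact hs y hy
  | zero => simp [norm3_zero]
  | add y z _ _ hy hz => exact (norm3_add_le b y z).trans_lt (ENNReal.add_lt_top.2 ⟨hy, hz⟩)
  | smul a y _ hy => rw [norm3_smul]; exact ENNReal.mul_lt_top enorm_lt_top hy

theorem exists_norm3_apply_le_of_mem_span {κ ι : Type*} [Finite κ] [Fintype ι] {x : κ → H}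
    {z : ι → H} (hx : ∀ k, x k ∈ span ℂ (range z)) :
    ∃ C ≠ ⊤, ∀ (T : H →ₗ[ℂ] H) (k : κ), norm3 b (T (x k)) ≤ C * ∑ j, norm3 b (T (z j)) := by
  have := Fintype.ofFinite κ
  choose a ha using fun k => (Submodule.mem_span_range_iff_exists_fun ℂ).1 (hx k)
  refine ⟨∑ k, ∑ j, ‖a k j‖ₑ, by simp [ENNReal.sum_eq_top], fun T k => ?_⟩
  calc norm3 b (T (x k)) = norm3 b (∑ j, a k j • T (z j)) := by simp [← ha k]
    _ ≤ ∑ j, ‖a k j‖ₑ * norm3 b (T (z j)) := (norm3_sum_le b _ _).trans_eq (by simp [norm3_smul])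
    _ ≤ ∑ j, ‖a k j‖ₑ * ∑ j', norm3 b (T (z j')) := by
        gcongr with j
        exact Finset.single_le_sum (f := fun j => norm3 b (T (z j))) (fun _ _ => zero_le)
          (Finset.mem_univ j)
    _ = (∑ j, ‖a k j‖ₑ) * ∑ j', norm3 b (T (z j')) := (Finset.sum_mul ..).symm
    _ ≤ (∑ k, ∑ j, ‖a k j‖ₑ) * ∑ j', norm3 b (T (z j')) := by
        gcongr
        exact Finset.single_le_sum (f := fun k => ∑ j, ‖a k j‖ₑ) (fun _ _ => zero_le)
          (Finset.mem_univ k)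

theorem norm3_inv_norm_smul_sub_le {x ξ : H} (hx : ‖x‖ = 1) (hξ : ‖ξ - x‖ ≤ 2⁻¹) :
    norm3 b ((‖ξ‖ : ℂ)⁻¹ • ξ - x) ≤ 2 * (1 + norm3 b x) * norm3 b (ξ - x) := by
  have hξ_ge : 2⁻¹ ≤ ‖ξ‖ := by
    have := norm_sub_norm_le x ξ
    rw [hx, norm_sub_rev] at this
    linarith
  have hinv : ‖ξ‖⁻¹ ≤ 2 := by
    simpa using inv_anti₀ (by norm_num) hξ_ge
  have hc : ‖(‖ξ‖ : ℂ)⁻¹‖ₑ ≤ 2 := by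
    rw [← ofReal_norm, norm_inv, Complex.norm_real, norm_norm]
    exact (ENNReal.ofReal_le_ofReal hinv).trans_eq (by simp)
  have hc1 : ‖(‖ξ‖ : ℂ)⁻¹ - 1‖ₑ ≤ 2 * norm3 b (ξ - x) := by
    have hreal : ‖(‖ξ‖ : ℂ)⁻¹ - 1‖ ≤ 2 * ‖ξ - x‖ := by
      have hξ0 : ‖ξ‖ ≠ 0 := by positivity
      have hsub : ‖1 - ‖ξ‖‖ ≤ ‖ξ - x‖ := by
        simpa [hx, norm_sub_rev ξ] using abs_norm_sub_norm_le x ξ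
      rw [show (‖ξ‖ : ℂ)⁻¹ - 1 = ((‖ξ‖⁻¹ * (1 - ‖ξ‖) : ℝ) : ℂ) by
          push_cast; rw [mul_sub, mul_one, inv_mul_cancel₀ (by exact_mod_cast hξ0)],
        Complex.norm_real, norm_mul, norm_inv, norm_norm]
      exact mul_le_mul hinv hsub (norm_nonneg _) zero_le_two
    calc ‖(‖ξ‖ : ℂ)⁻¹ - 1‖ₑ ≤ ENNReal.ofReal (2 * ‖ξ - x‖) := by
          rw [← ofReal_norm]; exact ENNReal.ofReal_le_ofReal hreal
      _ = 2 * ‖ξ - x‖ₑ := by rw [ENNReal.ofReal_mul zero_le_two, ofReal_norm]; simp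
      _ ≤ 2 * norm3 b (ξ - x) := by gcongr; exact enorm_le_norm3 b _
  calc norm3 b ((‖ξ‖ : ℂ)⁻¹ • ξ - x)
      = norm3 b ((‖ξ‖ : ℂ)⁻¹ • (ξ - x) + ((‖ξ‖ : ℂ)⁻¹ - 1) • x) := by congr 1; module
    _ ≤ ‖(‖ξ‖ : ℂ)⁻¹‖ₑ * norm3 b (ξ - x) + ‖(‖ξ‖ : ℂ)⁻¹ - 1‖ₑ * norm3 b x := by
        rw [← norm3_smul, ← norm3_smul]; exact norm3_add_le b _ _
    _ ≤ 2 * norm3 b (ξ - x) + 2 * norm3 b (ξ - x) * norm3 b x := by gcongr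
    _ = 2 * (1 + norm3 b x) * norm3 b (ξ - x) := by ring

theorem exists_norm_eq_one_inner_eq_zero_norm3_sub_le {κ : Type*} [Fintype κ] {u v : κ → H}
    (hv : Orthonormal ℂ v) {x : H} (hx : ‖x‖ = 1) (hux : ∀ i, ⟪u i, x⟫_ℂ = 0) {B s : ℝ≥0∞}
    (hvB : ∀ i, norm3 b (v i) ≤ B) (hvu : ∀ i, norm3 b (v i - u i) ≤ s)
    (hs : Fintype.card κ * B * s ≤ 2⁻¹) :
    ∃ y, ‖y‖ = 1 ∧ (∀ i, ⟪v i, y⟫_ℂ = 0) ∧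
      norm3 b (y - x) ≤ 2 * (1 + norm3 b x) * (Fintype.card κ * B * s) := by
  set ξ := x - ∑ i, ⟪v i, x⟫_ℂ • v i
  have hξv : ∀ i, ⟪v i, ξ⟫_ℂ = 0 := fun i => by
    rw [inner_sub_right, hv.inner_right_fintype, sub_self]
  have hcoef : ∀ i, ‖⟪v i, x⟫_ℂ‖ₑ ≤ s := fun i => calc
    ‖⟪v i, x⟫_ℂ‖ₑ = ‖⟪v i - u i, x⟫_ℂ‖ₑ := by rw [inner_sub_left, hux, sub_zero]
    _ ≤ ‖v i - u i‖ₑ * ‖x‖ₑ := by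
        simp only [enorm_eq_nnnorm]; exact_mod_cast nnnorm_inner_le_nnnorm _ _
    _ ≤ s := by
        rw [← ofReal_norm x, hx, ENNReal.ofReal_one, mul_one]
        exact (enorm_le_norm3 b _).trans (hvu i)
  have hξx : norm3 b (ξ - x) ≤ Fintype.card κ * B * s := calc
    norm3 b (ξ - x) = norm3 b (∑ i, ⟪v i, x⟫_ℂ • v i) := by
        rw [show ξ - x = -∑ i, ⟪v i, x⟫_ℂ • v i by simp [ξ], norm3_neg]
    _ ≤ ∑ i, ‖⟪v i, x⟫_ℂ‖ₑ * norm3 b (v i) :=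
        (norm3_sum_le b _ _).trans_eq (by simp [norm3_smul])
    _ ≤ ∑ _i : κ, s * B := by gcongr with i <;> simp [hcoef, hvB]
    _ = Fintype.card κ * B * s := by rw [Finset.sum_const, nsmul_eq_mul, Finset.card_univ]; ring
  have hξx' : ‖ξ - x‖ ≤ 2⁻¹ := by
    have := (enorm_le_norm3 b _).trans (hξx.trans hs)
    rwa [← ofReal_norm, show (2⁻¹ : ℝ≥0∞) = ENNReal.ofReal 2⁻¹ by simp,
      ENNReal.ofReal_le_ofReal_iff (by norm_num)] at this
  have hξ0 : ξ ≠ 0 := by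
    rintro h
    rw [h, zero_sub, norm_neg, hx] at hξx'
    norm_num at hξx'
  refine ⟨(‖ξ‖ : ℂ)⁻¹ • ξ, norm_smul_inv_norm hξ0, fun i => by rw [inner_smul_right, hξv, mul_zero],
    (norm3_inv_norm_smul_sub_le b hx hξx').trans (by gcongr)⟩

-- One Gram–Schmidt step: `a` is the normalised component of `f (Fin.last r)` orthogonal to the
-- orthonormal family `Sum.elim w y`.
theorem exists_orthonormal_snoc_norm3_sub_le {ι : Type*} [Fintype ι] {g w : ι → H} {r : ℕ}
    {f : Fin (r + 1) → H} {y : Fin r → H} (hgf : Orthonormal ℂ (Sum.elim g f))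
    (hwy : Orthonormal ℂ (Sum.elim w y)) {n : ℕ} {B s : ℝ≥0∞}
    (hB : ∀ i, norm3 b (Sum.elim g f i) ≤ B)
    (herr : ∀ i, norm3 b (Sum.elim w y i - Sum.elim g (Fin.init f) i) ≤ s)
    (hn : Fintype.card ι + r < n) (hs : (n + 1) * (B + 1) * s ≤ 2⁻¹) :
    ∃ a, Orthonormal ℂ (Sum.elim w (Fin.snoc y a)) ∧
      ∀ i, norm3 b (Sum.elim w (Fin.snoc y a) i - Sum.elim g f i) ≤
        2 * (n + 1) * (B + 1) ^ 2 * s := by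
  have hinit : Sum.elim g (Fin.init f) = Sum.elim g f ∘ Sum.map id Fin.castSucc :=
    (Sum.elim_comp_map ..).symm
  have hcard : (Fintype.card (ι ⊕ Fin r) : ℝ≥0∞) ≤ n + 1 := by
    rw [Fintype.card_sum, Fintype.card_fin]
    exact_mod_cast (by omega : Fintype.card ι + r ≤ n + 1)
  have h1 : (1 : ℝ≥0∞) ≤ (n + 1) * (B + 1) := one_le_mul le_add_self le_add_self
  have hs1 : s ≤ 1 := (le_mul_of_one_le_left zero_le h1).trans (hs.trans (by norm_num))
  have hperp : ∀ i, ⟪Sum.elim g (Fin.init f) i, f (Fin.last r)⟫_ℂ = 0 := fun i => by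
    rw [hinit]
    exact hgf.2 (j := .inr (Fin.last r)) (by rcases i with i | i <;> simp [Fin.castSucc_ne_last])
  have hwyB : ∀ i, norm3 b (Sum.elim w y i) ≤ B + 1 := fun i => calc
    norm3 b (Sum.elim w y i)
        = norm3 b (Sum.elim g (Fin.init f) i + (Sum.elim w y i - Sum.elim g (Fin.init f) i)) := by
      rw [add_sub_cancel]
    _ ≤ B + 1 := (norm3_add_le b _ _).trans (add_le_add (hinit ▸ hB _) ((herr i).trans hs1))
  obtain ⟨a, ha, hya, haerr⟩ := exists_norm_eq_one_inner_eq_zero_norm3_sub_le b hwy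
    (hgf.1 (.inr (Fin.last r))) hperp hwyB herr (le_trans (by gcongr) hs)
  refine ⟨a, hwy.sum_elim_snoc ha hya, ?_⟩
  have hsK : s ≤ 2 * (n + 1) * (B + 1) ^ 2 * s :=
    le_mul_of_one_le_left zero_le (one_le_mul (one_le_mul (by norm_num) le_add_self)
      (one_le_pow₀ le_add_self))
  rintro (i | i)
  · simpa using (herr (.inl i)).trans hsK
  induction i using Fin.lastCases with
  | cast i => simpa [Fin.init] using (herr (.inr i)).trans hsK
  | last =>
    simp only [Sum.elim_inr, Fin.snoc_last]
    refine haerr.trans ?_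
    calc 2 * (1 + norm3 b (f (Fin.last r))) * (Fintype.card (ι ⊕ Fin r) * (B + 1) * s)
        ≤ 2 * (B + 1) * ((n + 1) * (B + 1) * s) := by
          have hfB : 1 + norm3 b (f (Fin.last r)) ≤ B + 1 := by
            rw [add_comm]; gcongr; exact hB (.inr _)
          exact mul_le_mul' (mul_le_mul' le_rfl hfB) (mul_le_mul' (mul_le_mul' hcard le_rfl) le_rfl)
      _ = 2 * (n + 1) * (B + 1) ^ 2 * s := by ring

theorem exists_orthonormal_sum_elim_norm3_sub_le {ι : Type*} [Fintype ι] {g w : ι → H}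
    (hw : Orthonormal ℂ w) {n : ℕ} {B K t : ℝ≥0∞} (hK : 2 * (n + 1) * (B + 1) ^ 2 ≤ K)
    (hwg : ∀ i, norm3 b (w i - g i) ≤ t) {r : ℕ} (f : Fin r → H)
    (hgf : Orthonormal ℂ (Sum.elim g f)) (hB : ∀ i, norm3 b (Sum.elim g f i) ≤ B)
    (hn : Fintype.card ι + r ≤ n) (ht : (n + 1) * (B + 1) * (K ^ r * t) ≤ 2⁻¹) :
    ∃ y : Fin r → H, Orthonormal ℂ (Sum.elim w y) ∧
      ∀ i, norm3 b (Sum.elim w y i - Sum.elim g f i) ≤ K ^ r * t := by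
  induction r with
  | zero =>
    refine ⟨Fin.elim0, ⟨?_, ?_⟩, ?_⟩
    · rintro (i | i)
      exacts [hw.1 i, i.elim0]
    · rintro (i | i) (j | j) hij
      exacts [hw.2 fun h => hij (congrArg _ h), j.elim0, i.elim0, i.elim0]
    · rintro (i | i)
      exacts [by simpa using hwg i, i.elim0]
  | succ r ih =>
    have hK1 : 1 ≤ K :=
      (one_le_mul (one_le_mul (by norm_num) le_add_self) (one_le_pow₀ le_add_self)).trans hK
    have hsucc : K ^ r * t ≤ K ^ (r + 1) * t :=
      (le_mul_of_one_le_left zero_le hK1).trans_eq (by rw [pow_succ', mul_assoc])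
    have hinit : Sum.elim g (Fin.init f) = Sum.elim g f ∘ Sum.map id Fin.castSucc :=
      (Sum.elim_comp_map ..).symm
    obtain ⟨y, hy, hyerr⟩ := ih (Fin.init f)
      (hinit ▸ hgf.comp _ (Sum.map_injective.2 ⟨Function.injective_id, Fin.castSucc_injective r⟩))
      (fun i => hinit ▸ hB _) (by omega) (le_trans (by gcongr) ht)
    obtain ⟨a, ha, haerr⟩ := exists_orthonormal_snoc_norm3_sub_le b (n := n) hgf hy hB hyerr
      (by omega) (le_trans (by gcongr) ht)
    exact ⟨Fin.snoc y a, ha, fun i =>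
      ((haerr i).trans (mul_le_mul' hK le_rfl)).trans_eq (by rw [pow_succ', mul_assoc])⟩

theorem exists_linearIsometryEquiv_norm3_sub_le {ι ν κ : Type*} [Fintype ι] [Fintype ν]
    [Finite κ] {r : ℕ} {u : ι ⊕ Fin r → H} (hu : Orthonormal ℂ u) (hu3 : ∀ i, norm3 b (u i) ≠ ⊤)
    {z : ν → H} (hz : span ℂ (range (u ∘ Sum.inl)) = span ℂ (range z)) {x : κ → H}
    (hx : ∀ k, x k ∈ span ℂ (range u)) :
    ∃ A ≠ ⊤, ∃ C ≠ ⊤, ∀ V : H ≃ₗᵢ[ℂ] H, A * ∑ j, norm3 b (V (z j) - z j) ≤ 2⁻¹ →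
      ∃ U : H ≃ₗᵢ[ℂ] H, (∀ j, U (z j) = V (z j)) ∧
        ∀ k, norm3 b (U (x k) - x k) ≤ C * ∑ j, norm3 b (V (z j) - z j) := by
  set g := u ∘ Sum.inl
  obtain ⟨C₁, hC₁, hgz⟩ := exists_norm3_apply_le_of_mem_span b (x := g) (z := z)
    fun i => hz ▸ subset_span ⟨i, rfl⟩
  obtain ⟨C₂, hC₂, hxu⟩ := exists_norm3_apply_le_of_mem_span b hx
  set B := ∑ i, norm3 b (u i)
  have hB : B ≠ ⊤ := ENNReal.sum_ne_top.2 fun i _ => hu3 i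
  set n := Fintype.card ι + r
  set K : ℝ≥0∞ := 2 * (n + 1) * (B + 1) ^ 2
  have hK : K ≠ ⊤ := by simp [K, hB, ENNReal.mul_eq_top]
  refine ⟨(n + 1) * (B + 1) * (K ^ r * C₁), by simp [hB, hK, hC₁, ENNReal.mul_eq_top],
    C₂ * (Fintype.card (ι ⊕ Fin r) * (K ^ r * C₁)), by simp [hK, hC₁, hC₂, ENNReal.mul_eq_top],
    fun V hV => ?_⟩
  have hwg := hgz (V.toLinearEquiv.toLinearMap - LinearMap.id)
  simp only [LinearMap.sub_apply, LinearMap.id_apply, LinearEquiv.coe_toLinearMap,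
    LinearIsometryEquiv.coe_toLinearEquiv] at hwg
  have hgf : Sum.elim g (u ∘ Sum.inr) = u := Sum.elim_comp_inl_inr u
  have huB : ∀ i, norm3 b (u i) ≤ B := fun i =>
    Finset.single_le_sum (f := fun i => norm3 b (u i)) (fun _ _ => zero_le) (Finset.mem_univ i)
  obtain ⟨y, hy, hyu⟩ := exists_orthonormal_sum_elim_norm3_sub_le b (w := fun i => V (g i))
    (V.toLinearIsometry.orthonormal_comp_iff.2 (hu.comp _ Sum.inl_injective)) le_rfl hwg
    (u ∘ Sum.inr) (hgf ▸ hu) (hgf ▸ huB) le_rfl (by convert hV using 1; ring)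
  rw [hgf] at hyu
  obtain ⟨U, hU⟩ := exists_linearIsometryEquiv_apply_eq_of_orthonormal hu hy
  refine ⟨U, fun j => ?_, fun k => ?_⟩
  · have hUV : EqOn U.toLinearEquiv.toLinearMap V.toLinearEquiv.toLinearMap (range g) := by
      rintro _ ⟨i, rfl⟩
      exact hU (.inl i)
    exact LinearMap.eqOn_span' hUV (hz ▸ subset_span ⟨j, rfl⟩ : z j ∈ span ℂ (range g))
  · have hUx := hxu (U.toLinearEquiv.toLinearMap - LinearMap.id) k
    simp only [LinearMap.sub_apply, LinearMap.id_apply, LinearEquiv.coe_toLinearMap,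
      LinearIsometryEquiv.coe_toLinearEquiv] at hUx
    calc norm3 b (U (x k) - x k) ≤ C₂ * ∑ i, norm3 b (U (u i) - u i) := hUx
      _ ≤ C₂ * ∑ _i : ι ⊕ Fin r, K ^ r * (C₁ * ∑ j, norm3 b (V (z j) - z j)) := by
          gcongr with i
          rw [hU]
          exact hyu i
      _ = _ := by rw [Finset.sum_const, Finset.card_univ, nsmul_eq_mul]; ring

end

theorem ENNReal.exists_pos_mul_ofReal_lt {C c : ℝ≥0∞} (hC : C ≠ ⊤) (hc : c ≠ 0) :
    ∃ δ : ℝ, 0 < δ ∧ C * ENNReal.ofReal δ < c := by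
  obtain ⟨a, ha, hac⟩ := ENNReal.exists_pos_mul_lt hC hc
  refine ⟨(min a 1).toReal, ENNReal.toReal_pos (by positivity) (by simp), ?_⟩
  rw [ENNReal.ofReal_toReal (by simp), mul_comm]
  exact (mul_le_mul_left (min_le_left a 1) C).trans_lt hac

theorem stmt_7_general {H : Type*} [NormedAddCommGroup H] [InnerProductSpace ℂ H]
    (b : HilbertBasis ℕ+ ℂ H) (M N : ℕ)
    (z : Fin N → H)
    (hz : ∀ j, z j ∈ Submodule.span ℂ ((fun k : ℕ+ => b k) '' {k : ℕ+ | (k : ℕ) ≤ M})) :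
    ∀ ε : ℝ, 0 < ε → ∃ δ : ℝ, 0 < δ ∧ ∀ φ : Fin N → H,
      (∃ V : H ≃ₗᵢ[ℂ] H, ∀ j, V (z j) = φ j) →
      (∀ j, norm3 b (φ j) < ⊤) →
      (∑ j : Fin N, norm3 b (φ j - z j)) < ENNReal.ofReal δ →
      ∃ U : H ≃ₗᵢ[ℂ] H, (∀ j, U (z j) = φ j) ∧
        ∀ k : ℕ+, (k : ℕ) ≤ M →
          norm3 b (U (b k) - b k) < ENNReal.ofReal ε ∧ norm3 b (U (b k)) < ⊤ := by
  intro ε hε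
  set P := {k : ℕ+ | (k : ℕ) ≤ M}
  have hP : P.Finite := (Set.finite_le_nat M).preimage PNat.coe_injective.injOn
  have : Finite P := hP.to_subtype
  have : FiniteDimensional ℂ (span ℂ ((fun k : ℕ+ => b k) '' P)) := .span_of_finite ℂ (hP.image _)
  obtain ⟨r, u, hu, huz, huC⟩ := exists_orthonormal_sum_span_eq (span_le.2 (range_subset_iff.2 hz))
  have hb3 : ∀ k, norm3 b (b k) < ⊤ := fun k => by simp [norm3_hilbertBasis]
  have hu3 : ∀ i, norm3 b (u i) ≠ ⊤ := fun i =>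
    (norm3_lt_top_of_mem_span b (s := (fun k : ℕ+ => b k) '' P)
      (by rintro _ ⟨k, -, rfl⟩; exact hb3 k) (huC ▸ subset_span ⟨i, rfl⟩)).ne
  obtain ⟨A, hA, C, hC, hU⟩ := exists_linearIsometryEquiv_norm3_sub_le b hu hu3 huz
    (x := fun k : P => b k) fun k => by rw [huC]; exact subset_span ⟨k, k.2, rfl⟩
  obtain ⟨δ, hδ, hδAC⟩ := ENNReal.exists_pos_mul_ofReal_lt (ENNReal.add_ne_top.2 ⟨hA, hC⟩)
    (lt_min (by norm_num : (0 : ℝ≥0∞) < 2⁻¹) (ENNReal.ofReal_pos.2 hε)).ne'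
  refine ⟨δ, hδ, fun φ ⟨V, hV⟩ _ hη => ?_⟩
  simp only [← hV] at hη ⊢
  have hsmall := (mul_le_mul' le_rfl hη.le).trans_lt hδAC
  obtain ⟨U, hUz, hUb⟩ :=
    hU V ((mul_le_mul' le_self_add le_rfl).trans (hsmall.le.trans (min_le_left _ _)))
  refine ⟨U, hUz, fun k hk => ?_⟩
  have hUk := (hUb ⟨k, hk⟩).trans_lt
    ((mul_le_mul' le_add_self le_rfl).trans_lt (hsmall.trans_le (min_le_right _ _)))
  refine ⟨hUk, ?_⟩
  calc norm3 b (U (b k)) ≤ norm3 b (b k) + norm3 b (U (b k) - b k) := by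
        simpa using norm3_add_le b (b k) (U (b k) - b k)
    _ < ⊤ := ENNReal.add_lt_top.2 ⟨hb3 k, hUk.trans ENNReal.ofReal_lt_top⟩

/-- Lemma 4.2 of the paper.  For an N-tuple `z` of vectors of
`span{e₁,…,e_M}` and every `ε > 0` there is `δ > 0` such that any N-tuple `φ` which is
unitarily equivalent to `z`, has finite `‖·‖₍₃₎`-norms and satisfies
`∑_j ‖φ^j − z^j‖₍₃₎ < δ`, is of the form `φ = U z` for a unitary `U` with
`‖U e_j − e_j‖₍₃₎ < ε` for `j = 1, …, M`. -/
theorem stmt_7 {H : Type*} [NormedAddCommGroup H] [InnerProductSpace ℂ H] [CompleteSpace H]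
    (hinf : ¬ FiniteDimensional ℂ H)
    (b : HilbertBasis ℕ+ ℂ H) (M N : ℕ) (hM : 1 ≤ M) (hN : 1 ≤ N)
    (z : Fin N → H)
    (hz : ∀ j, z j ∈ Submodule.span ℂ ((fun k : ℕ+ => b k) '' {k : ℕ+ | (k : ℕ) ≤ M})) :
    ∀ ε : ℝ, 0 < ε → ∃ δ : ℝ, 0 < δ ∧ ∀ φ : Fin N → H,
      (∃ V : H ≃ₗᵢ[ℂ] H, ∀ j, V (z j) = φ j) →
      (∀ j, norm3 b (φ j) < ⊤) →
      (∑ j : Fin N, norm3 b (φ j - z j)) < ENNReal.ofReal δ →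
      ∃ U : H ≃ₗᵢ[ℂ] H, (∀ j, U (z j) = φ j) ∧
        ∀ k : ℕ+, (k : ℕ) ≤ M →
          norm3 b (U (b k) - b k) < ENNReal.ofReal ε ∧ norm3 b (U (b k)) < ⊤ :=
  stmt_7_general b M N z hz
end

section
/- Let W : [0,1] → ℝ be continuously differentiable, μ : [0,1] → ℝ four times continuously differentiable, c ∈ ℝ, C₀ > 0, and let j ≥ 1 be an integer. Let (λ_k)_{k≥1} be a strictly increasing sequence of real numbers with |λ_k − k²π² − c| ≤ C₀ for all k, and let (φ_k)_{k≥1} be twice continuously differentiable real-valued functions on [0,1] such that for every k: φ_k(0) = φ_k(1) = 0, −φ_k'' + W·φ_k = λ_k·φ_k on [0,1], sup_{x∈[0,1]} |φ_k(x) − √2·sin(kπx)| ≤ C₀/k, and sup_{x∈[0,1]} |φ_k'(x) − √2·kπ·cos(kπx)| ≤ C₀. Then there exist C' > 0 and K ∈ ℕ such that for every k ≥ K: | k³·∫₀¹ μ(x)φ_j(x)φ_k(x) dx − (2√2/π³)·( (−1)^k·μ'(1)·φ_j'(1) − μ'(0)·φ_j'(0) ) | ≤ C'/k. -/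
/-!
Two integrations by parts against `-φ_k'' + W φ_k = λ_k φ_k` give
`λ_k² ∫ μ φ_j φ_k = ∫ h φ_k + 2 (μ'(1) φ_j'(1) φ_k'(1) - μ'(0) φ_j'(0) φ_k'(0))`
with `h` continuous and independent of `k`: the first produces no boundary term because `μ φ_j`
vanishes at `0` and `1`, and of `g = -(μ φ_j)'' + W μ φ_j` only `-2 μ' φ_j'` survives at the
endpoints. Inserting `φ_k'(0) = √2 kπ + O(1)`, `φ_k'(1) = (-1)^k √2 kπ + O(1)` and
`λ_k = k²π² + O(1)`, then dividing by `λ_k²`, leaves an error `O(1/k)`.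
-/

open Set intervalIntegral Asymptotics Filter

structure IsDirichletEigenfunction (W φ : ℝ → ℝ) (lam : ℝ) : Prop where
  contDiff : ContDiff ℝ 2 φ
  map_zero : φ 0 = 0
  map_one : φ 1 = 0
  ode : ∀ x ∈ Icc (0 : ℝ) 1, -deriv (deriv φ) x + W x * φ x = lam * φ x

namespace IsDirichletEigenfunction

variable {W φ : ℝ → ℝ} {lam : ℝ}

theorem contDiff_deriv (hφ : IsDirichletEigenfunction W φ lam) : ContDiff ℝ 1 (deriv φ) :=
  hφ.contDiff.deriv'

theorem eigenvalue_mul_integral (hφ : IsDirichletEigenfunction W φ lam)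
    (hW : ContinuousOn W (Icc 0 1)) {u u' : ℝ → ℝ}
    (hu : ∀ x ∈ Icc (0 : ℝ) 1, HasDerivAt u (u' x) x) (hu' : ContDiff ℝ 1 u') :
    lam * ∫ x in (0 : ℝ)..1, u x * φ x =
      (∫ x in (0 : ℝ)..1, (-deriv u' x + W x * u x) * φ x)
        - (u 1 * deriv φ 1 - u 0 * deriv φ 0) := by
  have hφ' := hφ.contDiff_deriv
  have hu_cont : ContinuousOn u (Icc 0 1) := fun x hx => (hu x hx).continuousAt.continuousWithinAt
  have hu'' : Continuous (deriv u') := hu'.continuous_deriv le_rfl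
  have hφ'' : Continuous (deriv (deriv φ)) := hφ'.continuous_deriv le_rfl
  have hφc : Continuous φ := hφ.contDiff.continuous
  rw [← uIcc_of_le zero_le_one] at hu_cont hW hu
  have hgreen : ∫ x in (0 : ℝ)..1, (deriv u' x * φ x - u x * deriv (deriv φ) x) =
      -(u 1 * deriv φ 1 - u 0 * deriv φ 0) := by
    rw [integral_eq_sub_of_hasDerivAt (f := fun x => u' x * φ x - u x * deriv φ x)]
    · simp only [hφ.map_zero, hφ.map_one]
      ring
    · intro x hx
      convert ((hu'.differentiable one_ne_zero x).hasDerivAt.fun_mul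
        (hφ.contDiff.differentiable two_ne_zero x).hasDerivAt).fun_sub
        ((hu x hx).fun_mul (hφ'.differentiable one_ne_zero x).hasDerivAt) using 1
      ring
    · exact (hu''.continuousOn.mul hφc.continuousOn).sub (hu_cont.mul hφ''.continuousOn)
        |>.intervalIntegrable
  calc lam * ∫ x in (0 : ℝ)..1, u x * φ x
      = ∫ x in (0 : ℝ)..1, u x * (-deriv (deriv φ) x + W x * φ x) := by
        rw [← integral_const_mul]
        refine integral_congr fun x hx => ?_
        rw [uIcc_of_le zero_le_one] at hx
        simp only [hφ.ode x hx]
        ring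
    _ = (∫ x in (0 : ℝ)..1, (-deriv u' x + W x * u x) * φ x) +
          ∫ x in (0 : ℝ)..1, (deriv u' x * φ x - u x * deriv (deriv φ) x) := by
        rw [← integral_add]
        · exact integral_congr fun x _ => by ring
        · exact ((hu''.continuousOn.neg.add (hW.mul hu_cont)).mul hφc.continuousOn)
            |>.intervalIntegrable
        · exact ((hu''.continuousOn.mul hφc.continuousOn).sub
            (hu_cont.mul hφ''.continuousOn)).intervalIntegrable
    _ = _ := by rw [hgreen]; ring

theorem exists_forall_sq_eigenvalue_mul_integral (hφ : IsDirichletEigenfunction W φ lam)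
    (hW : ContDiff ℝ 1 W) {μ : ℝ → ℝ} (hμ : ContDiff ℝ 4 μ) :
    ∃ h : ℝ → ℝ, ContinuousOn h (Icc 0 1) ∧
      ∀ (ψ : ℝ → ℝ) (ν : ℝ), IsDirichletEigenfunction W ψ ν →
        ν ^ 2 * ∫ x in (0 : ℝ)..1, μ x * φ x * ψ x =
          (∫ x in (0 : ℝ)..1, h x * ψ x) +
            2 * (deriv μ 1 * deriv φ 1 * deriv ψ 1 - deriv μ 0 * deriv φ 0 * deriv ψ 0) := by
  set μ₁ := deriv μ
  set μ₂ := deriv μ₁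
  set μ₃ := deriv μ₂
  have hμ₁ : ContDiff ℝ 3 μ₁ := hμ.deriv'
  have hμ₂ : ContDiff ℝ 2 μ₂ := hμ₁.deriv'
  have hμ₃ : ContDiff ℝ 1 μ₃ := hμ₂.deriv'
  have hφ' := hφ.contDiff_deriv
  have : ContDiff ℝ 1 φ := hφ.contDiff.of_le (by norm_num)
  have : ContDiff ℝ 1 μ := hμ.of_le (by norm_num)
  have : ContDiff ℝ 1 μ₁ := hμ₁.of_le (by norm_num)
  have : ContDiff ℝ 1 μ₂ := hμ₂.of_le (by norm_num)
  have dμ (x : ℝ) := ((hμ.differentiable (by norm_num)) x).hasDerivAt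
  have dμ₁ (x : ℝ) := ((hμ₁.differentiable (by norm_num)) x).hasDerivAt
  have dμ₂ (x : ℝ) := ((hμ₂.differentiable (by norm_num)) x).hasDerivAt
  have dφ (x : ℝ) := ((hφ.contDiff.differentiable (by norm_num)) x).hasDerivAt
  have dφ' (x : ℝ) := ((hφ'.differentiable (by norm_num)) x).hasDerivAt
  have hφ'' : ∀ x ∈ Icc (0 : ℝ) 1, deriv (deriv φ) x = (W x - lam) * φ x := fun x hx => by
    linear_combination -hφ.ode x hx
  -- `g = -(μφ)'' + Wμφ` on `[0, 1]`; `g₁` is `g'` with `φ''` replaced by `(W - lam)φ`, which makes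
  -- it `C¹` although `φ` is only `C²`.
  set g : ℝ → ℝ := fun x => -(μ₂ x * φ x) - 2 * (μ₁ x * deriv φ x) + lam * (μ x * φ x)
  set g₁ : ℝ → ℝ := fun x => -(μ₃ x * φ x) - 3 * (μ₂ x * deriv φ x)
    - 2 * (μ₁ x * ((W x - lam) * φ x)) + lam * (μ₁ x * φ x + μ x * deriv φ x)
  have hg : ∀ x ∈ Icc (0 : ℝ) 1, HasDerivAt g (g₁ x) x := fun x hx => by
    refine ((((dμ₂ x).fun_mul (dφ x)).fun_neg.fun_sub
      (((dμ₁ x).fun_mul (dφ' x)).const_mul 2)).fun_add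
      (((dμ x).fun_mul (dφ x)).const_mul lam)).congr_deriv ?_
    rw [hφ'' x hx]
    ring
  have hg₁ : ContDiff ℝ 1 g₁ := by fun_prop
  refine ⟨fun x => -deriv g₁ x + W x * g x, ?_, fun ψ ν hψ => ?_⟩
  · have hgc : Continuous g := by fun_prop
    exact ((hg₁.continuous_deriv le_rfl).neg.add (hW.continuous.mul hgc)).continuousOn
  · have hf (x : ℝ) (_ : x ∈ Icc (0 : ℝ) 1) :
        HasDerivAt (fun x => μ x * φ x) (μ₁ x * φ x + μ x * deriv φ x) x :=
      (dμ x).fun_mul (dφ x)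
    have hf₁ : ContDiff ℝ 1 fun x => μ₁ x * φ x + μ x * deriv φ x := by fun_prop
    have hWc := hW.continuous.continuousOn (s := Icc 0 1)
    have step₁ : ν * ∫ x in (0 : ℝ)..1, μ x * φ x * ψ x = ∫ x in (0 : ℝ)..1, g x * ψ x := by
      rw [hψ.eigenvalue_mul_integral hWc hf hf₁]
      simp only [hφ.map_zero, hφ.map_one, mul_zero, zero_mul, sub_zero]
      refine integral_congr fun x hx => ?_
      rw [uIcc_of_le zero_le_one] at hx
      have hf₁' : deriv (fun x => μ₁ x * φ x + μ x * deriv φ x) x =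
          μ₂ x * φ x + 2 * (μ₁ x * deriv φ x) + μ x * deriv (deriv φ) x :=
        (((dμ₁ x).fun_mul (dφ x)).fun_add ((dμ x).fun_mul (dφ' x))).deriv.trans (by ring)
      simp only [g, hf₁', hφ'' x hx]
      ring
    calc ν ^ 2 * ∫ x in (0 : ℝ)..1, μ x * φ x * ψ x
        = ν * ∫ x in (0 : ℝ)..1, g x * ψ x := by rw [sq, mul_assoc, step₁]
      _ = _ := by
        rw [hψ.eigenvalue_mul_integral hWc hg hg₁]
        simp only [g, hφ.map_zero, hφ.map_one]
        ring

end IsDirichletEigenfunction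

theorem isBigO_pow_three_mul_sub_div_sq_mul {a b : ℝ} (ha : 0 < a) {lam I D : ℕ → ℝ}
    (hlam : (fun k : ℕ => lam k - (k : ℝ) ^ 2 * a) =O[atTop] fun _ => (1 : ℝ))
    (hD : D =O[atTop] fun _ => (1 : ℝ))
    (hI : (fun k : ℕ => lam k ^ 2 * I k - b * k * D k) =O[atTop] fun _ => (1 : ℝ)) :
    (fun k : ℕ => (k : ℝ) ^ 3 * I k - b / a ^ 2 * D k) =O[atTop] fun k => (k : ℝ)⁻¹ := by
  set q : ℕ → ℝ := fun k => (k : ℝ) ^ 2 * a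
  have hq : Tendsto q atTop atTop :=
    ((tendsto_pow_atTop two_ne_zero).comp tendsto_natCast_atTop_atTop).atTop_mul_const ha
  have hequiv : lam ~[atTop] q :=
    hlam.trans_isLittleO ((isLittleO_one_left_iff ℝ).2 (tendsto_norm_atTop_atTop.comp hq))
  have hq_cube : q =O[atTop] fun k : ℕ => (k : ℝ) ^ 3 := by
    refine .of_bound a (eventually_atTop.2 ⟨1, fun k hk => ?_⟩)
    have hk : (1 : ℝ) ≤ k := by exact_mod_cast hk
    simp only [q, norm_mul, norm_pow, Real.norm_natCast, Real.norm_of_nonneg ha.le]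
    rw [mul_comm]
    exact mul_le_mul_of_nonneg_left (pow_le_pow_right₀ hk (by norm_num)) ha.le
  -- Where `lam k ≠ 0`: `k³ I - (b / a²) D = lam⁻² (k³ E - (b / a²) D (lam - q) (q + lam))`,
  -- with `E = lam² I - b k D`.
  have hrest : (fun k : ℕ => (k : ℝ) ^ 3 * (lam k ^ 2 * I k - b * k * D k)
      - b / a ^ 2 * D k * (lam k - q k) * (q k + lam k)) =O[atTop] fun k : ℕ => (k : ℝ) ^ 3 := by
    refine IsBigO.sub (by simpa using (isBigO_refl (fun k : ℕ => (k : ℝ) ^ 3) atTop).mul hI) ?_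
    have := ((hD.const_mul_left (b / a ^ 2)).mul hlam).mul
      ((isBigO_refl q atTop).add hequiv.isBigO)
    simp only [one_mul] at this
    exact this.trans hq_cube
  have hcube_inv : (fun k => (q k)⁻¹ ^ 2 * (k : ℝ) ^ 3) =O[atTop] fun k : ℕ => (k : ℝ)⁻¹ := by
    refine .of_bound (a⁻¹ ^ 2) (Eventually.of_forall fun k => le_of_eq ?_)
    rcases eq_or_ne (k : ℝ) 0 with hk | hk
    · simp [q, hk]
    · simp only [q, norm_mul, norm_pow, norm_inv, Real.norm_natCast, Real.norm_of_nonneg ha.le]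
      field_simp
  refine (((hequiv.inv.isBigO.pow 2).mul hrest).trans hcube_inv).congr' ?_ .rfl
  filter_upwards [(hequiv.symm.tendsto_atTop hq).eventually_ne_atTop 0, eventually_ne_atTop 0]
    with k hlk hk
  simp only [q, Pi.inv_apply]
  field_simp
  ring

theorem isBigO_integral_mul_add_boundary_sub {φ : ℕ → ℝ → ℝ} {h : ℝ → ℝ} {C0 : ℝ} (hC0 : 0 ≤ C0)
    (A B : ℝ) (hh : ContinuousOn h (Icc 0 1))
    (hsup : ∀ k : ℕ, 1 ≤ k → ∀ x ∈ Icc (0 : ℝ) 1,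
      |φ k x - Real.sqrt 2 * Real.sin ((k : ℝ) * Real.pi * x)| ≤ C0 / k)
    (hsup' : ∀ k : ℕ, 1 ≤ k → ∀ x ∈ Icc (0 : ℝ) 1,
      |deriv (φ k) x - Real.sqrt 2 * (k : ℝ) * Real.pi * Real.cos ((k : ℝ) * Real.pi * x)| ≤ C0) :
    (fun k : ℕ => (∫ x in (0 : ℝ)..1, h x * φ k x) + 2 * (A * deriv (φ k) 1 - B * deriv (φ k) 0)
      - 2 * Real.sqrt 2 * Real.pi * k * ((-1 : ℝ) ^ k * A - B)) =O[atTop] fun _ => (1 : ℝ) := by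
  obtain ⟨M, hM⟩ := isCompact_Icc.exists_bound_of_continuousOn hh
  refine .of_bound (M * (Real.sqrt 2 + C0) + 2 * |A| * C0 + 2 * |B| * C0)
    (eventually_atTop.2 ⟨1, fun k hk => ?_⟩)
  have hφ : ∀ x ∈ Icc (0 : ℝ) 1, |φ k x| ≤ Real.sqrt 2 + C0 := fun x hx => by
    have hsin : |Real.sqrt 2 * Real.sin ((k : ℝ) * Real.pi * x)| ≤ Real.sqrt 2 := by
      rw [abs_mul, abs_of_nonneg (Real.sqrt_nonneg 2)]
      exact mul_le_of_le_one_right (Real.sqrt_nonneg 2) (Real.abs_sin_le_one _)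
    have hC0k : C0 / k ≤ C0 := div_le_self hC0 (by exact_mod_cast hk)
    linarith [abs_sub_abs_le_abs_sub (φ k x) (Real.sqrt 2 * Real.sin ((k : ℝ) * Real.pi * x)),
      hsup k hk x hx]
  have hint : |∫ x in (0 : ℝ)..1, h x * φ k x| ≤ M * (Real.sqrt 2 + C0) := by
    have := norm_integral_le_of_norm_le_const (a := 0) (b := 1) (C := M * (Real.sqrt 2 + C0))
      (f := fun x => h x * φ k x) ?_
    · simpa using this
    intro x hx
    rw [uIoc_of_le zero_le_one] at hx
    have hx : x ∈ Icc (0 : ℝ) 1 := Ioc_subset_Icc_self hx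
    rw [norm_mul]
    exact mul_le_mul (hM x hx) (hφ x hx) (norm_nonneg _) ((norm_nonneg _).trans (hM x hx))
  have h1 : |deriv (φ k) 1 - Real.sqrt 2 * k * Real.pi * (-1) ^ k| ≤ C0 := by
    simpa [Real.cos_nat_mul_pi] using hsup' k hk 1 (by norm_num)
  have h0 : |deriv (φ k) 0 - Real.sqrt 2 * k * Real.pi| ≤ C0 := by
    simpa using hsup' k hk 0 (by norm_num)
  calc _ = |(∫ x in (0 : ℝ)..1, h x * φ k x)
          + 2 * A * (deriv (φ k) 1 - Real.sqrt 2 * k * Real.pi * (-1) ^ k)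
          - 2 * B * (deriv (φ k) 0 - Real.sqrt 2 * k * Real.pi)| := by
        rw [Real.norm_eq_abs]
        ring_nf
    _ ≤ |∫ x in (0 : ℝ)..1, h x * φ k x|
          + |2 * A * (deriv (φ k) 1 - Real.sqrt 2 * k * Real.pi * (-1) ^ k)|
          + |2 * B * (deriv (φ k) 0 - Real.sqrt 2 * k * Real.pi)| :=
        (abs_sub _ _).trans (add_le_add_left (abs_add_le _ _) _)
    _ ≤ _ := by
        simp only [abs_mul, abs_two, norm_one, mul_one]
        gcongr

theorem stmt_13_general (W μ : ℝ → ℝ) (c C0 : ℝ) (hC0 : 0 < C0) (j : ℕ) (hj : 1 ≤ j)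
    (hW : ContDiff ℝ 1 W) (hμ : ContDiff ℝ 4 μ)
    (lam : ℕ → ℝ) (φ : ℕ → ℝ → ℝ)
    (hasym : ∀ k : ℕ, 1 ≤ k → |lam k - (k : ℝ) ^ 2 * Real.pi ^ 2 - c| ≤ C0)
    (hreg : ∀ k : ℕ, 1 ≤ k → ContDiff ℝ 2 (φ k))
    (hbc : ∀ k : ℕ, 1 ≤ k → φ k 0 = 0 ∧ φ k 1 = 0)
    (hode : ∀ k : ℕ, 1 ≤ k → ∀ x ∈ Set.Icc (0 : ℝ) 1,
      -(deriv (deriv (φ k))) x + W x * φ k x = lam k * φ k x)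
    (hsup : ∀ k : ℕ, 1 ≤ k → ∀ x ∈ Set.Icc (0 : ℝ) 1,
      |φ k x - Real.sqrt 2 * Real.sin ((k : ℝ) * Real.pi * x)| ≤ C0 / k)
    (hsup' : ∀ k : ℕ, 1 ≤ k → ∀ x ∈ Set.Icc (0 : ℝ) 1,
      |deriv (φ k) x - Real.sqrt 2 * (k : ℝ) * Real.pi * Real.cos ((k : ℝ) * Real.pi * x)|
        ≤ C0) :
    ∃ C' : ℝ, 0 < C' ∧ ∃ K : ℕ, ∀ k : ℕ, K ≤ k →
      |(k : ℝ) ^ 3 * (∫ x in (0 : ℝ)..1, μ x * φ j x * φ k x)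
          - (2 * Real.sqrt 2 / Real.pi ^ 3) *
              ((-1 : ℝ) ^ k * deriv μ 1 * deriv (φ j) 1 - deriv μ 0 * deriv (φ j) 0)|
        ≤ C' / k := by
  have hφ (k : ℕ) (hk : 1 ≤ k) : IsDirichletEigenfunction W (φ k) (lam k) :=
    ⟨hreg k hk, (hbc k hk).1, (hbc k hk).2, hode k hk⟩
  obtain ⟨h, hh, hkey⟩ := (hφ j hj).exists_forall_sq_eigenvalue_mul_integral hW hμ
  set A := deriv μ 1 * deriv (φ j) 1
  set B := deriv μ 0 * deriv (φ j) 0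
  have hlam : (fun k : ℕ => lam k - (k : ℝ) ^ 2 * Real.pi ^ 2) =O[atTop] fun _ => (1 : ℝ) := by
    refine .of_bound (C0 + |c|) (eventually_atTop.2 ⟨1, fun k hk => ?_⟩)
    have := abs_add_le (lam k - (k : ℝ) ^ 2 * Real.pi ^ 2 - c) c
    simp only [sub_add_cancel, Real.norm_eq_abs, norm_one, mul_one] at this ⊢
    linarith [hasym k hk]
  have hD : (fun k : ℕ => (-1 : ℝ) ^ k * A - B) =O[atTop] fun _ => (1 : ℝ) := by
    refine .of_bound (|A| + |B|) (Eventually.of_forall fun k => ?_)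
    simpa [abs_mul] using abs_sub ((-1 : ℝ) ^ k * A) B
  have hI : (fun k : ℕ => lam k ^ 2 * (∫ x in (0 : ℝ)..1, μ x * φ j x * φ k x)
      - 2 * Real.sqrt 2 * Real.pi * k * ((-1 : ℝ) ^ k * A - B)) =O[atTop] fun _ => (1 : ℝ) := by
    refine (isBigO_integral_mul_add_boundary_sub hC0.le A B hh hsup hsup').congr'
      (eventually_atTop.2 ⟨1, fun k hk => ?_⟩) .rfl
    simp only [hkey _ _ (hφ k hk)]
  have hconst : 2 * Real.sqrt 2 / Real.pi ^ 3 = 2 * Real.sqrt 2 * Real.pi / (Real.pi ^ 2) ^ 2 := by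
    field_simp
  obtain ⟨C', hC', hbound⟩ :=
    (isBigO_pow_three_mul_sub_div_sq_mul (by positivity) hlam hD hI).exists_pos
  obtain ⟨K, hK⟩ := eventually_atTop.1 hbound.bound
  refine ⟨C', hC', K, fun k hk => ?_⟩
  simpa [hconst, div_eq_mul_inv, mul_assoc] using hK k hk

/-- asymptotic expansion of the matrix elements `k³⟨μφ_j, φ_k⟩` for Dirichlet
eigenfunctions `φ_k` of `−∂²ₓₓ + W` on `[0,1]` satisfying the classical eigenvalue and
eigenfunction asymptotics:
`k³ ∫₀¹ μ φ_j φ_k = (2√2/π³)((−1)^k μ'(1)φ_j'(1) − μ'(0)φ_j'(0)) + O(1/k)`. -/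
theorem stmt_13 (W μ : ℝ → ℝ) (c C0 : ℝ) (hC0 : 0 < C0) (j : ℕ) (hj : 1 ≤ j)
    (hW : ContDiff ℝ 1 W) (hμ : ContDiff ℝ 4 μ)
    (lam : ℕ → ℝ) (φ : ℕ → ℝ → ℝ)
    (hmono : ∀ k l : ℕ, 1 ≤ k → k < l → lam k < lam l)
    (hasym : ∀ k : ℕ, 1 ≤ k → |lam k - (k : ℝ) ^ 2 * Real.pi ^ 2 - c| ≤ C0)
    (hreg : ∀ k : ℕ, 1 ≤ k → ContDiff ℝ 2 (φ k))
    (hbc : ∀ k : ℕ, 1 ≤ k → φ k 0 = 0 ∧ φ k 1 = 0)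
    (hode : ∀ k : ℕ, 1 ≤ k → ∀ x ∈ Set.Icc (0 : ℝ) 1,
      -(deriv (deriv (φ k))) x + W x * φ k x = lam k * φ k x)
    (hsup : ∀ k : ℕ, 1 ≤ k → ∀ x ∈ Set.Icc (0 : ℝ) 1,
      |φ k x - Real.sqrt 2 * Real.sin ((k : ℝ) * Real.pi * x)| ≤ C0 / k)
    (hsup' : ∀ k : ℕ, 1 ≤ k → ∀ x ∈ Set.Icc (0 : ℝ) 1,
      |deriv (φ k) x - Real.sqrt 2 * (k : ℝ) * Real.pi * Real.cos ((k : ℝ) * Real.pi * x)|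
        ≤ C0) :
    ∃ C' : ℝ, 0 < C' ∧ ∃ K : ℕ, ∀ k : ℕ, K ≤ k →
      |(k : ℝ) ^ 3 * (∫ x in (0 : ℝ)..1, μ x * φ j x * φ k x)
          - (2 * Real.sqrt 2 / Real.pi ^ 3) *
              ((-1 : ℝ) ^ k * deriv μ 1 * deriv (φ j) 1 - deriv μ 0 * deriv (φ j) 0)|
        ≤ C' / k :=
  stmt_13_general W μ c C0 hC0 j hj hW hμ lam φ hasym hreg hbc hode hsup hsup'
end

section
/- Let W : [0,1] → ℝ be continuously differentiable, μ : [0,1] → ℝ four times continuously differentiable, c ∈ ℝ, C₀ > 0, and let j ≥ 1 be an integer. Let (λ_k)_{k≥1} be a strictly increasing sequence of real numbers with |λ_k − k²π² − c| ≤ C₀ for all k, and let (φ_k)_{k≥1} be twice continuously differentiable real-valued functions on [0,1] such that for every k: φ_k(0) = φ_k(1) = 0, −φ_k'' + W·φ_k = λ_k·φ_k on [0,1], sup_{x∈[0,1]} |φ_k(x) − √2·sin(kπx)| ≤ C₀/k, and sup_{x∈[0,1]} |φ_k'(x) − √2·kπ·cos(kπx)| ≤ C₀. Assume moreover that μ'(1)·φ_j'(1)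 − μ'(0)·φ_j'(0) ≠ 0 and μ'(1)·φ_j'(1) + μ'(0)·φ_j'(0) ≠ 0. Then there exist C_j > 0 and K_j ∈ ℕ such that | ∫₀¹ μ(x)φ_j(x)φ_k(x) dx | ≥ C_j / k³ for all k ≥ K_j. -/
/-!
Write `L = -∂² + W` and `I_k = ∫₀¹ μ φ_j φ_k`. Since `L` is symmetric on functions vanishing at
the endpoints, `λ_k I_k = ∫ g φ_k` with `g = L(μ φ_j)`. Once `φ_j''` is eliminated through the
eigenvalue equation, `g` has a `C¹` derivative on `[0,1]` (this is where `μ ∈ C⁴` and `W ∈ C¹`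
enter), so `L` can be moved onto `g` a second time. Now boundary terms survive, because
`g(0) = -2 μ'(0) φ_j'(0)` and `g(1) = -2 μ'(1) φ_j'(1)`:
`λ_k² I_k = 2 μ'(1) φ_j'(1) φ_k'(1) - 2 μ'(0) φ_j'(0) φ_k'(0) + ∫ R φ_k`
with `R` independent of `k`. As `φ_k'(1) ≈ √2 kπ (-1)^k` and `φ_k'(0) ≈ √2 kπ`, the boundary
terms have size `≳ k` by the two non-degeneracy conditions, the integral stays bounded, and
`λ_k² = O(k⁴)`; hence `|I_k| ≳ k⁻³`.
-/

open Real Set MeasureTheory intervalIntegral Interval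

section Green

variable {a b lam : ℝ} {W f f' f'' χ : ℝ → ℝ}

theorem integral_mul_deriv_deriv_eq_of_eq_zero (hf : ∀ x ∈ [[a, b]], HasDerivAt f (f' x) x)
    (hf' : ∀ x ∈ [[a, b]], HasDerivAt f' (f'' x) x) (hf'' : IntervalIntegrable f'' volume a b)
    (hχ : ContDiff ℝ 2 χ) (hχa : χ a = 0) (hχb : χ b = 0) :
    ∫ x in a..b, f x * deriv (deriv χ) x
      = f b * deriv χ b - f a * deriv χ a + ∫ x in a..b, f'' x * χ x := by
  have hχ1 : ContDiff ℝ 1 (deriv χ) := hχ.deriv'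
  have hf'c : ContinuousOn f' [[a, b]] := fun x hx => (hf' x hx).continuousAt.continuousWithinAt
  rw [integral_mul_deriv_eq_deriv_mul hf
      (fun x _ => (hχ1.differentiable one_ne_zero x).hasDerivAt) hf'c.intervalIntegrable
      ((hχ1.continuous_deriv le_rfl).intervalIntegrable a b),
    integral_mul_deriv_eq_deriv_mul hf' (fun x _ => (hχ.differentiable two_ne_zero x).hasDerivAt)
      hf'' (hχ1.continuous.intervalIntegrable a b), hχa, hχb]
  ring

theorem eigenvalue_mul_integral_mul_eq (hf : ∀ x ∈ [[a, b]], HasDerivAt f (f' x) x)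
    (hf' : ∀ x ∈ [[a, b]], HasDerivAt f' (f'' x) x) (hf'' : IntervalIntegrable f'' volume a b)
    (hW : ContinuousOn W [[a, b]]) (hχ : ContDiff ℝ 2 χ) (hχa : χ a = 0) (hχb : χ b = 0)
    (hχode : ∀ x ∈ [[a, b]], -deriv (deriv χ) x + W x * χ x = lam * χ x) :
    lam * ∫ x in a..b, f x * χ x
      = f a * deriv χ a - f b * deriv χ b + ∫ x in a..b, (W x * f x - f'' x) * χ x := by
  have hfc : ContinuousOn f [[a, b]] := fun x hx => (hf x hx).continuousAt.continuousWithinAt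
  have hχc : Continuous χ := hχ.continuous
  have hχ2c : Continuous (deriv (deriv χ)) := (hχ.deriv' (n := 1)).continuous_deriv le_rfl
  have hWfχ : IntervalIntegrable (fun x => W x * f x * χ x) volume a b :=
    ((hW.mul hfc).mul hχc.continuousOn).intervalIntegrable
  calc lam * ∫ x in a..b, f x * χ x
      = ∫ x in a..b, W x * f x * χ x - f x * deriv (deriv χ) x := by
        rw [← intervalIntegral.integral_const_mul]
        refine integral_congr fun x hx => ?_
        linear_combination (-f x) * hχode x hx
    _ = f a * deriv χ a - f b * deriv χ b + ∫ x in a..b, (W x * f x - f'' x) * χ x := by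
        simp only [sub_mul]
        rw [integral_sub (g := fun x => f x * deriv (deriv χ) x) hWfχ
            (hfc.mul hχ2c.continuousOn).intervalIntegrable,
          integral_sub (g := fun x => f'' x * χ x) hWfχ (hf''.mul_continuousOn hχc.continuousOn),
          integral_mul_deriv_deriv_eq_of_eq_zero hf hf' hf'' hχ hχa hχb]
        ring

end Green

section Eigenfunction

/-- `(-∂² + W)(μ ψ)` when `-ψ'' + W ψ = ν ψ`, with `ψ''` eliminated. -/
noncomputable def schrodingerMul (μ ψ : ℝ → ℝ) (ν x : ℝ) : ℝ :=
  ν * μ x * ψ x - deriv (deriv μ) x * ψ x - 2 * deriv μ x * deriv ψ x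

/-- The derivative of `schrodingerMul` wherever `-ψ'' + W ψ = ν ψ` holds, with `ψ''` eliminated. -/
noncomputable def schrodingerMulDeriv (W μ ψ : ℝ → ℝ) (ν x : ℝ) : ℝ :=
  ν * (deriv μ x * ψ x + μ x * deriv ψ x) - deriv (deriv (deriv μ)) x * ψ x
    - 3 * deriv (deriv μ) x * deriv ψ x - 2 * deriv μ x * ((W x - ν) * ψ x)

/-- `(-∂² + W)² (μ ψ)` wherever `-ψ'' + W ψ = ν ψ` holds. -/
noncomputable def schrodingerSqMul (W μ ψ : ℝ → ℝ) (ν x : ℝ) : ℝ :=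
  W x * schrodingerMul μ ψ ν x - deriv (schrodingerMulDeriv W μ ψ ν) x

variable {a b ν lam : ℝ} {W μ ψ χ : ℝ → ℝ}

theorem hasDerivAt_schrodingerMul {x : ℝ} (hμ : ContDiff ℝ 3 μ) (hψ : ContDiff ℝ 2 ψ)
    (hx : -deriv (deriv ψ) x + W x * ψ x = ν * ψ x) :
    HasDerivAt (schrodingerMul μ ψ ν) (schrodingerMulDeriv W μ ψ ν x) x := by
  have dμ := (hμ.differentiable (by norm_num) x).hasDerivAt
  have dμ1 := ((hμ.deriv' (n := 2)).differentiable (by norm_num) x).hasDerivAt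
  have dμ2 := ((hμ.deriv' (n := 2)).deriv' (n := 1)).differentiable one_ne_zero x |>.hasDerivAt
  have dψ := (hψ.differentiable two_ne_zero x).hasDerivAt
  have dψ1 := ((hψ.deriv' (n := 1)).differentiable one_ne_zero x).hasDerivAt
  refine ((((dμ.const_mul ν).mul dψ).sub (dμ2.mul dψ)).sub
    ((dμ1.const_mul 2).mul dψ1)).congr_deriv ?_
  simp only [schrodingerMulDeriv]
  linear_combination 2 * deriv μ x * hx

theorem contDiff_schrodingerMulDeriv (hW : ContDiff ℝ 1 W) (hμ : ContDiff ℝ 4 μ)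
    (hψ : ContDiff ℝ 2 ψ) : ContDiff ℝ 1 (schrodingerMulDeriv W μ ψ ν) := by
  have hψ1 : ContDiff ℝ 1 (deriv ψ) := hψ.deriv'
  have hψ0 : ContDiff ℝ 1 ψ := hψ.of_le one_le_two
  have hμ3 : ContDiff ℝ 1 (deriv (deriv (deriv μ))) := hμ.deriv'.deriv'.deriv'
  have hμ2 : ContDiff ℝ 1 (deriv (deriv μ)) := (hμ.deriv'.deriv' (n := 2)).of_le one_le_two
  have hμ1 : ContDiff ℝ 1 (deriv μ) := (hμ.deriv' (n := 3)).of_le (by norm_num)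
  have hμ0 : ContDiff ℝ 1 μ := hμ.of_le (by norm_num)
  unfold schrodingerMulDeriv
  fun_prop

theorem continuousOn_schrodingerSqMul {s : Set ℝ} (hW : ContDiff ℝ 1 W) (hμ : ContDiff ℝ 4 μ)
    (hψ : ContDiff ℝ 2 ψ) (hψode : ∀ x ∈ s, -deriv (deriv ψ) x + W x * ψ x = ν * ψ x) :
    ContinuousOn (schrodingerSqMul W μ ψ ν) s :=
  hW.continuous.continuousOn.mul (fun x hx => (hasDerivAt_schrodingerMul (hμ.of_le (by norm_num))
    hψ (hψode x hx)).continuousAt.continuousWithinAt) |>.sub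
    ((contDiff_schrodingerMulDeriv hW hμ hψ).continuous_deriv le_rfl).continuousOn

theorem eigenvalue_mul_integral_mul_mul_eq (hW : ContinuousOn W [[a, b]]) (hμ : ContDiff ℝ 2 μ)
    (hψ : ContDiff ℝ 2 ψ) (hψa : ψ a = 0) (hψb : ψ b = 0)
    (hψode : ∀ x ∈ [[a, b]], -deriv (deriv ψ) x + W x * ψ x = ν * ψ x)
    (hχ : ContDiff ℝ 2 χ) (hχa : χ a = 0) (hχb : χ b = 0)
    (hχode : ∀ x ∈ [[a, b]], -deriv (deriv χ) x + W x * χ x = lam * χ x) :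
    lam * ∫ x in a..b, μ x * ψ x * χ x = ∫ x in a..b, schrodingerMul μ ψ ν x * χ x := by
  have dμ (x : ℝ) := (hμ.differentiable two_ne_zero x).hasDerivAt
  have dμ1 (x : ℝ) := ((hμ.deriv' (n := 1)).differentiable one_ne_zero x).hasDerivAt
  have dψ (x : ℝ) := (hψ.differentiable two_ne_zero x).hasDerivAt
  have dψ1 (x : ℝ) := ((hψ.deriv' (n := 1)).differentiable one_ne_zero x).hasDerivAt
  have hf'' : Continuous fun x => deriv (deriv μ) x * ψ x + deriv μ x * deriv ψ x
      + (deriv μ x * deriv ψ x + μ x * deriv (deriv ψ) x) := by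
    have := hμ.continuous_deriv one_le_two
    have := (hμ.deriv' (n := 1)).continuous_deriv le_rfl
    have := hψ.continuous_deriv one_le_two
    have := (hψ.deriv' (n := 1)).continuous_deriv le_rfl
    fun_prop
  rw [eigenvalue_mul_integral_mul_eq (f := fun x => μ x * ψ x) (fun x _ => (dμ x).mul (dψ x))
      (fun x _ => ((dμ1 x).mul (dψ x)).add ((dμ x).mul (dψ1 x))) (hf''.intervalIntegrable a b)
      hW hχ hχa hχb hχode, hψa, hψb]
  simp only [mul_zero, zero_mul, sub_zero, zero_add]
  refine integral_congr fun x hx => ?_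
  simp only [schrodingerMul]
  linear_combination μ x * χ x * hψode x hx

theorem sq_eigenvalue_mul_integral_mul_mul_eq (hW : ContDiff ℝ 1 W) (hμ : ContDiff ℝ 4 μ)
    (hψ : ContDiff ℝ 2 ψ) (hψa : ψ a = 0) (hψb : ψ b = 0)
    (hψode : ∀ x ∈ [[a, b]], -deriv (deriv ψ) x + W x * ψ x = ν * ψ x)
    (hχ : ContDiff ℝ 2 χ) (hχa : χ a = 0) (hχb : χ b = 0)
    (hχode : ∀ x ∈ [[a, b]], -deriv (deriv χ) x + W x * χ x = lam * χ x) :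
    lam ^ 2 * ∫ x in a..b, μ x * ψ x * χ x
      = 2 * (deriv μ b * deriv ψ b) * deriv χ b - 2 * (deriv μ a * deriv ψ a) * deriv χ a
        + ∫ x in a..b, schrodingerSqMul W μ ψ ν x * χ x := by
  have hp : ContDiff ℝ 1 (schrodingerMulDeriv W μ ψ ν) := contDiff_schrodingerMulDeriv hW hμ hψ
  rw [sq, mul_assoc, eigenvalue_mul_integral_mul_mul_eq hW.continuous.continuousOn
      (hμ.of_le (by norm_num)) hψ hψa hψb hψode hχ hχa hχb hχode,
    eigenvalue_mul_integral_mul_eq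
      (fun x hx => hasDerivAt_schrodingerMul (hμ.of_le (by norm_num)) hψ (hψode x hx))
      (fun x _ => (hp.differentiable one_ne_zero x).hasDerivAt)
      ((hp.continuous_deriv le_rfl).intervalIntegrable a b) hW.continuous.continuousOn
      hχ hχa hχb hχode]
  simp only [schrodingerSqMul, schrodingerMul, hψa, hψb]
  ring

end Eigenfunction

section Estimates

theorem abs_le_mul_sq_of_abs_sub_le {L p c C x : ℝ} (h : |L - x ^ 2 * p - c| ≤ C)
    (hx : 1 ≤ x) : |L| ≤ (|p| + |c| + C) * x ^ 2 := by
  have hx2 : 1 ≤ x ^ 2 := one_le_pow₀ hx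
  have hcC : 0 ≤ |c| + C := add_nonneg (abs_nonneg c) ((abs_nonneg _).trans h)
  calc |L| = |(L - x ^ 2 * p - c) + x ^ 2 * p + c| := by ring_nf
    _ ≤ |L - x ^ 2 * p - c| + |x ^ 2 * p| + |c| := abs_add_three _ _ _
    _ ≤ x ^ 2 * |p| + (|c| + C) := by
        rw [abs_mul, abs_of_nonneg (by positivity : (0 : ℝ) ≤ x ^ 2)]
        linarith
    _ ≤ x ^ 2 * |p| + (|c| + C) * x ^ 2 := by nlinarith
    _ = (|p| + |c| + C) * x ^ 2 := by ring

theorem abs_le_sqrt_two_add_of_abs_sub_le {y t C k : ℝ} (h : |y - √2 * sin t| ≤ C / k)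
    (hC : 0 ≤ C) (hk : 1 ≤ k) : |y| ≤ √2 + C := by
  have hsin : |√2 * sin t| ≤ √2 := by
    rw [abs_mul, abs_of_nonneg (sqrt_nonneg 2)]
    exact mul_le_of_le_one_right (sqrt_nonneg 2) (abs_sin_le_one t)
  linarith [abs_sub_abs_le_abs_sub y (√2 * sin t), div_le_self hC hk]

theorem abs_integral_mul_le {a b M B : ℝ} {R χ : ℝ → ℝ} (hR : ∀ x ∈ [[a, b]], |R x| ≤ M)
    (hχ : ∀ x ∈ [[a, b]], |χ x| ≤ B) : |∫ x in a..b, R x * χ x| ≤ M * B * |b - a| := by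
  have hM : 0 ≤ M := (abs_nonneg _).trans (hR a left_mem_uIcc)
  rw [← Real.norm_eq_abs]
  refine intervalIntegral.norm_integral_le_of_norm_le_const fun x hx => ?_
  have hx := uIoc_subset_uIcc hx
  rw [Real.norm_eq_abs, abs_mul]
  exact mul_le_mul (hR x hx) (hχ x hx) (abs_nonneg _) hM

theorem min_abs_sub_abs_add_le_abs_mul_neg_one_pow_sub (a b : ℝ) (k : ℕ) :
    min |a - b| |a + b| ≤ |a * (-1) ^ k - b| := by
  rcases neg_one_pow_eq_or ℝ k with h | h <;> rw [h]
  · simp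
  · rw [show a * -1 - b = -(a + b) by ring, abs_neg]
    exact min_le_right _ _

theorem sub_le_abs_two_mul_sub_two_mul_add {a b d₀ d₁ r t C : ℝ} {k : ℕ} (ht : 0 ≤ t)
    (h₁ : |d₁ - t * (-1) ^ k| ≤ C) (h₀ : |d₀ - t| ≤ C) :
    2 * t * min |a - b| |a + b| - (2 * |a| * C + 2 * |b| * C + |r|)
      ≤ |2 * a * d₁ - 2 * b * d₀ + r| := by
  set σ : ℝ := (-1) ^ k
  have hmain : 2 * t * min |a - b| |a + b| ≤ |2 * t * (a * σ - b)| := by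
    rw [abs_mul, abs_of_nonneg (by positivity : 0 ≤ 2 * t)]
    exact mul_le_mul_of_nonneg_left (min_abs_sub_abs_add_le_abs_mul_neg_one_pow_sub a b k)
      (by positivity)
  have h₁' : |2 * a * (d₁ - t * σ)| ≤ 2 * |a| * C := by
    rw [abs_mul, abs_mul, abs_two]
    gcongr
  have h₀' : |-(2 * b * (d₀ - t))| ≤ 2 * |b| * C := by
    rw [abs_neg, abs_mul, abs_mul, abs_two]
    gcongr
  have hsplit : 2 * a * d₁ - 2 * b * d₀ + r
      = 2 * t * (a * σ - b) + (2 * a * (d₁ - t * σ) + -(2 * b * (d₀ - t)) + r) := by ring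
  rw [hsplit]
  linarith [abs_sub_abs_le_abs_add (2 * t * (a * σ - b))
    (2 * a * (d₁ - t * σ) + -(2 * b * (d₀ - t)) + r), abs_add_three (2 * a * (d₁ - t * σ))
    (-(2 * b * (d₀ - t))) r]

theorem exists_pos_div_pow_three_le (lam I : ℕ → ℝ) {A B E : ℝ} (hA : 0 < A) (hB : 0 < B)
    (hlam : ∀ k : ℕ, 1 ≤ k → |lam k| ≤ A * k ^ 2)
    (hI : ∀ k : ℕ, 1 ≤ k → B * k - E ≤ |lam k ^ 2 * I k|) :
    ∃ C : ℝ, 0 < C ∧ ∃ K : ℕ, ∀ k : ℕ, K ≤ k → C / (k : ℝ) ^ 3 ≤ |I k| := by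
  obtain ⟨N, hN⟩ := exists_nat_gt (2 * E / B)
  refine ⟨B / (2 * A ^ 2), by positivity, max N 1, fun k hk => ?_⟩
  have hk1 : 1 ≤ k := le_of_max_le_right hk
  have hk0 : (0 : ℝ) < k := by positivity
  have hE : 2 * E < B * k := by
    rw [← div_lt_iff₀' hB]
    exact hN.trans_le (by exact_mod_cast le_of_max_le_left hk)
  have hlam2 : lam k ^ 2 ≤ (A * k ^ 2) ^ 2 := by
    rw [← sq_abs]
    exact pow_le_pow_left₀ (abs_nonneg _) (hlam k hk1) 2
  have hIk : B * k / 2 ≤ (A * k ^ 2) ^ 2 * |I k| :=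
    calc B * k / 2 ≤ B * k - E := by linarith
      _ ≤ |lam k ^ 2 * I k| := hI k hk1
      _ = lam k ^ 2 * |I k| := by rw [abs_mul, abs_of_nonneg (sq_nonneg _)]
      _ ≤ (A * k ^ 2) ^ 2 * |I k| := mul_le_mul_of_nonneg_right hlam2 (abs_nonneg _)
  rw [div_div, div_le_iff₀ (by positivity)]
  refine le_of_mul_le_mul_right ?_ hk0
  linarith [show |I k| * (2 * A ^ 2 * k ^ 3) * k = 2 * ((A * k ^ 2) ^ 2 * |I k|) by ring]

end Estimates

theorem stmt_14_general (W μ : ℝ → ℝ) (c C0 : ℝ) (hC0 : 0 < C0) (j : ℕ) (hj : 1 ≤ j)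
    (hW : ContDiff ℝ 1 W) (hμ : ContDiff ℝ 4 μ)
    (lam : ℕ → ℝ) (φ : ℕ → ℝ → ℝ)
    (hasym : ∀ k : ℕ, 1 ≤ k → |lam k - (k : ℝ) ^ 2 * Real.pi ^ 2 - c| ≤ C0)
    (hreg : ∀ k : ℕ, 1 ≤ k → ContDiff ℝ 2 (φ k))
    (hbc : ∀ k : ℕ, 1 ≤ k → φ k 0 = 0 ∧ φ k 1 = 0)
    (hode : ∀ k : ℕ, 1 ≤ k → ∀ x ∈ Set.Icc (0 : ℝ) 1,
      -(deriv (deriv (φ k))) x + W x * φ k x = lam k * φ k x)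
    (hsup : ∀ k : ℕ, 1 ≤ k → ∀ x ∈ Set.Icc (0 : ℝ) 1,
      |φ k x - Real.sqrt 2 * Real.sin ((k : ℝ) * Real.pi * x)| ≤ C0 / k)
    (hsup' : ∀ k : ℕ, 1 ≤ k → ∀ x ∈ Set.Icc (0 : ℝ) 1,
      |deriv (φ k) x - Real.sqrt 2 * (k : ℝ) * Real.pi * Real.cos ((k : ℝ) * Real.pi * x)|
        ≤ C0)
    (hbd1 : deriv μ 1 * deriv (φ j) 1 - deriv μ 0 * deriv (φ j) 0 ≠ 0)
    (hbd2 : deriv μ 1 * deriv (φ j) 1 + deriv μ 0 * deriv (φ j) 0 ≠ 0) :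
    ∃ Cj : ℝ, 0 < Cj ∧ ∃ Kj : ℕ, ∀ k : ℕ, Kj ≤ k →
      Cj / (k : ℝ) ^ 3 ≤ |∫ x in (0 : ℝ)..1, μ x * φ j x * φ k x| := by
  rw [← uIcc_of_le zero_le_one] at hode hsup hsup'
  set a := deriv μ 1 * deriv (φ j) 1
  set b := deriv μ 0 * deriv (φ j) 0
  set R := schrodingerSqMul W μ (φ j) (lam j)
  obtain ⟨M, hM⟩ := isCompact_uIcc.exists_bound_of_continuousOn
    (continuousOn_schrodingerSqMul hW hμ (hreg j hj) (hode j hj))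
  have hm : 0 < min |a - b| |a + b| := lt_min (abs_pos.mpr hbd1) (abs_pos.mpr hbd2)
  refine exists_pos_div_pow_three_le lam (fun k => ∫ x in (0 : ℝ)..1, μ x * φ j x * φ k x)
    (A := π ^ 2 + |c| + C0) (B := 2 * (√2 * π) * min |a - b| |a + b|)
    (E := 2 * |a| * C0 + 2 * |b| * C0 + M * (√2 + C0)) (by positivity) (by positivity)
    (fun k hk => ?_) (fun k hk => ?_)
  · simpa [abs_of_pos pi_pos] using abs_le_mul_sq_of_abs_sub_le (hasym k hk) (by exact_mod_cast hk)
  have hk' : (1 : ℝ) ≤ k := by exact_mod_cast hk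
  have hRk : |∫ x in (0 : ℝ)..1, R x * φ k x| ≤ M * (√2 + C0) := by
    simpa using abs_integral_mul_le (fun x hx => (Real.norm_eq_abs (R x)) ▸ hM x hx)
      (fun x hx => abs_le_sqrt_two_add_of_abs_sub_le (hsup k hk x hx) hC0.le hk')
  rw [sq_eigenvalue_mul_integral_mul_mul_eq hW hμ (hreg j hj) (hbc j hj).1 (hbc j hj).2 (hode j hj)
    (hreg k hk) (hbc k hk).1 (hbc k hk).2 (hode k hk)]
  refine le_trans ?_ (sub_le_abs_two_mul_sub_two_mul_add (t := √2 * k * π) (by positivity)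
    (by simpa [cos_nat_mul_pi] using hsup' k hk 1 right_mem_uIcc)
    (by simpa using hsup' k hk 0 left_mem_uIcc))
  linarith

/-- under the classical Dirichlet eigenvalue/eigenfunction asymptotics and the
boundary conditions `μ'(1)φ_j'(1) ± μ'(0)φ_j'(0) ≠ 0`, the matrix elements satisfy the lower
bound `|∫₀¹ μ φ_j φ_k| ≥ C_j / k³` for all large `k`. -/
theorem stmt_14 (W μ : ℝ → ℝ) (c C0 : ℝ) (hC0 : 0 < C0) (j : ℕ) (hj : 1 ≤ j)
    (hW : ContDiff ℝ 1 W) (hμ : ContDiff ℝ 4 μ)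
    (lam : ℕ → ℝ) (φ : ℕ → ℝ → ℝ)
    (hmono : ∀ k l : ℕ, 1 ≤ k → k < l → lam k < lam l)
    (hasym : ∀ k : ℕ, 1 ≤ k → |lam k - (k : ℝ) ^ 2 * Real.pi ^ 2 - c| ≤ C0)
    (hreg : ∀ k : ℕ, 1 ≤ k → ContDiff ℝ 2 (φ k))
    (hbc : ∀ k : ℕ, 1 ≤ k → φ k 0 = 0 ∧ φ k 1 = 0)
    (hode : ∀ k : ℕ, 1 ≤ k → ∀ x ∈ Set.Icc (0 : ℝ) 1,
      -(deriv (deriv (φ k))) x + W x * φ k x = lam k * φ k x)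
    (hsup : ∀ k : ℕ, 1 ≤ k → ∀ x ∈ Set.Icc (0 : ℝ) 1,
      |φ k x - Real.sqrt 2 * Real.sin ((k : ℝ) * Real.pi * x)| ≤ C0 / k)
    (hsup' : ∀ k : ℕ, 1 ≤ k → ∀ x ∈ Set.Icc (0 : ℝ) 1,
      |deriv (φ k) x - Real.sqrt 2 * (k : ℝ) * Real.pi * Real.cos ((k : ℝ) * Real.pi * x)|
        ≤ C0)
    (hbd1 : deriv μ 1 * deriv (φ j) 1 - deriv μ 0 * deriv (φ j) 0 ≠ 0)
    (hbd2 : deriv μ 1 * deriv (φ j) 1 + deriv μ 0 * deriv (φ j) 0 ≠ 0) :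
    ∃ Cj : ℝ, 0 < Cj ∧ ∃ Kj : ℕ, ∀ k : ℕ, Kj ≤ k →
      Cj / (k : ℝ) ^ 3 ≤ |∫ x in (0 : ℝ)..1, μ x * φ j x * φ k x| :=
  stmt_14_general W μ c C0 hC0 j hj hW hμ lam φ hasym hreg hbc hode hsup hsup' hbd1 hbd2
end
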